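/- arXiv:2605.12666 — 10 statements merged into one kernel-verified Lean document; each statement's English description precedes it below -/
import Mathlib

section
/- Let f : ℝ → ℝ be a polynomial. Then the function H : ℝ → ℝ defined by H(x) = f''(x) / √(1 + (f'(x))²) is globally Lipschitz continuous on ℝ, i.e., there exists L_H ≥ 0 such that |H(x) − H(y)| ≤ L_H |x − y| for all x, y ∈ ℝ. -/
/-!
Write `r = f'`, `q = f''` and `s = √(1 + r²)`. Then `H = q / s` has derivative
`q' / s - (r / s) * (q / s) ^ 2`. Every ratio `u / s` with `deg u ≤ deg r` is bounded on `ℝ`: it is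
continuous, and at infinity `u = O(r)` while `|r| ≤ s`. Since `q'`, `q` and `r` all have degree at
most `deg r`, the derivative of `H` is bounded, and the mean value theorem makes `H` Lipschitz.
-/

open Polynomial Asymptotics Bornology Filter

theorem abs_sub_le_mul_abs_sub_of_hasDerivAt {f f' : ℝ → ℝ} {C : ℝ}
    (hf : ∀ x, HasDerivAt f (f' x) x) (bound : ∀ x, |f' x| ≤ C) (x y : ℝ) :
    |f x - f y| ≤ C * |x - y| :=
  Convex.norm_image_sub_le_of_norm_hasDerivWithin_le (s := Set.univ)
    (fun z _ => (hf z).hasDerivWithinAt) (fun z _ => bound z) convex_univ trivial trivial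

theorem HasDerivAt.div_sqrt_one_add_sq {g h : ℝ → ℝ} {g' h' x : ℝ}
    (hg : HasDerivAt g g' x) (hh : HasDerivAt h h' x) :
    HasDerivAt (fun y => g y / √(1 + h y ^ 2))
      (g' / √(1 + h x ^ 2) - h x * h' * g x / √(1 + h x ^ 2) ^ 3) x := by
  have hpos : 0 < 1 + h x ^ 2 := by positivity
  have hs : HasDerivAt (fun y => √(1 + h y ^ 2)) ((2 * h x * h') / (2 * √(1 + h x ^ 2))) x := by
    refine ((hh.pow 2).const_add 1).sqrt hpos.ne' |>.congr_deriv ?_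
    norm_num
  refine (hg.div hs (Real.sqrt_pos.2 hpos).ne').congr_deriv ?_
  field_simp

theorem Polynomial.exists_abs_eval_div_sqrt_one_add_sq_le {P Q : ℝ[X]}
    (h : P.degree ≤ Q.degree) : ∃ C, ∀ x, |P.eval x / √(1 + Q.eval x ^ 2)| ≤ C := by
  set s : ℝ → ℝ := fun x => √(1 + Q.eval x ^ 2)
  have hs : ∀ x, s x ≠ 0 := fun x => (Real.sqrt_pos.2 (by positivity)).ne'
  have hQs : (fun x => Q.eval x) =O[cocompact ℝ] s := .of_bound' <| .of_forall fun x => by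
    simpa [s, Real.norm_eq_abs, abs_of_nonneg (Real.sqrt_nonneg _)] using
      Real.abs_le_sqrt (le_add_of_nonneg_left zero_le_one)
  have hPs : (fun x => P.eval x) =O[cocompact ℝ] s := by
    rw [← Metric.cobounded_eq_cocompact] at hQs ⊢
    exact (isBigO_cobounded_of_degree_le h).trans hQs
  have hcont : Continuous fun x => P.eval x / s x :=
    P.continuous.div (by fun_prop) hs
  have hbig : (fun x => P.eval x / s x) =O[cocompact ℝ] (1 : ℝ → ℝ) := by
    refine (hPs.mul (isBigO_refl (fun x => (s x)⁻¹) _)).congr (fun x => rfl) fun x => ?_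
    exact mul_inv_cancel₀ (hs x)
  obtain ⟨C, hC⟩ := isBounded_iff_forall_norm_le.1 (hcont.isBounded_range_iff_isBigO.2 hbig)
  exact ⟨C, fun x => hC _ ⟨x, rfl⟩⟩

/-- For a polynomial `f : ℝ → ℝ`, the preconditioned Hessian
`H(x) = f''(x) / √(1 + f'(x)²)` (relative to `φ = cosh ∘ |·| − 1`) is globally
Lipschitz continuous on `ℝ`. -/
theorem polynomial_preconditioned_hessian_lipschitz
    (f : ℝ → ℝ) (hf : ∃ p : Polynomial ℝ, ∀ x, f x = p.eval x) :
    ∃ L_H : ℝ, 0 ≤ L_H ∧ ∀ x y : ℝ,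
      |deriv (deriv f) x / Real.sqrt (1 + deriv f x ^ 2) -
        deriv (deriv f) y / Real.sqrt (1 + deriv f y ^ 2)| ≤ L_H * |x - y| := by
  obtain ⟨p, rfl⟩ : ∃ p : ℝ[X], f = fun x => p.eval x := hf.imp fun p hp => funext hp
  set r := derivative p
  set q := derivative r
  have hr : deriv (fun x => p.eval x) = fun x => r.eval x := funext fun x => p.deriv
  have hq : deriv (fun x => r.eval x) = fun x => q.eval x := funext fun x => r.deriv
  rw [hr, hq]
  obtain ⟨A, hA⟩ := exists_abs_eval_div_sqrt_one_add_sq_le (P := derivative q) (Q := r)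
    (degree_derivative_le.trans degree_derivative_le)
  obtain ⟨B, hB⟩ := exists_abs_eval_div_sqrt_one_add_sq_le (P := q) (Q := r) degree_derivative_le
  obtain ⟨D, hD⟩ := exists_abs_eval_div_sqrt_one_add_sq_le (P := r) (Q := r) le_rfl
  have hA0 : 0 ≤ A := (abs_nonneg _).trans (hA 0)
  have hD0 : 0 ≤ D := (abs_nonneg _).trans (hD 0)
  refine ⟨A + D * B ^ 2, by positivity, abs_sub_le_mul_abs_sub_of_hasDerivAt
    (fun x => (q.hasDerivAt x).div_sqrt_one_add_sq (r.hasDerivAt x)) fun x => ?_⟩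
  set s := √(1 + r.eval x ^ 2)
  calc |(derivative q).eval x / s - r.eval x * q.eval x * q.eval x / s ^ 3|
      = |(derivative q).eval x / s - r.eval x / s * (q.eval x / s) ^ 2| := by
        congr 1; ring
    _ ≤ |(derivative q).eval x / s| + |r.eval x / s| * |q.eval x / s| ^ 2 := by
      rw [← abs_pow, ← abs_mul]; exact abs_sub _ _
    _ ≤ A + D * B ^ 2 := by gcongr <;> [exact hA x; exact hD x; exact hB x]
end

section
/- Let f : ℝⁿ → ℝ be twice continuously differentiable, let x⋆ ∈ ℝⁿ satisfy ∇f(x⋆) = 0 and ∇²f(x⋆) ⪰ μ_f I for some μ_f > 0, and let φ* : ℝⁿ → ℝ be twice continuously differentiable with ∇φ*(0) = 0 and ∇²φ*(0) positive definite. Define g(x) = ∇φ*(∇f(x)) and H(x) = ∇²φ*(∇f(x)) ∇²f(x). Then there exists δ > 0 such that for every x⁰ ∈ B(x⋆; δ), the matrix H(x^k) is invertible at every iterate and the sequence defined by x^{k+1} = x^k − H(x^k)^{-1} g(x^k) remains in B(x⋆; δ) and converges Q-superlinearly to x⋆, i.e., x^k → x⋆ and ‖x^{k+1} − x⋆‖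 / ‖x^k − x⋆‖ → 0 (whenever x^k ≠ x⋆). -/
/-!
Newton's step satisfies `x⁺ - x⋆ = H(x)⁻¹ (H(x) (x - x⋆) - g(x))`. Since `g(x⋆) = 0`,
`g` is differentiable at `x⋆` with derivative `H(x⋆)` and `H` is continuous, the bracket is
`o(‖x - x⋆‖)`; and `H(x⋆) = ∇²φ*(0) ∇²f(x⋆)` is a product of two positive definite maps, hence
invertible, so `H(x)⁻¹` stays bounded near `x⋆`. Near `x⋆` each step therefore at least halves the
distance to `x⋆`, which keeps the iterates in a ball and makes them converge, and the `o`-estimate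
along the convergent sequence is the superlinear rate.
-/

open Filter Metric Asymptotics Topology

section ClmApply

variable {α 𝕜 E F G : Type*} [NontriviallyNormedField 𝕜] [NormedAddCommGroup E] [NormedSpace 𝕜 E]
  [NormedAddCommGroup F] [NormedSpace 𝕜 F] [NormedAddCommGroup G] {l : Filter α}
  {T : α → E →L[𝕜] F} {v : α → E} {g : α → G}

theorem Asymptotics.IsBigO.clm_apply_isLittleO (hT : T =O[l] fun _ => (1 : ℝ)) (hv : v =o[l] g) :
    (fun x => T x (v x)) =o[l] g :=
  isBoundedBilinearMap_apply.isBigO_comp.trans_isLittleO <| by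
    simpa using (hT.norm_left.mul_isLittleO hv.norm_norm).norm_right

theorem Asymptotics.IsLittleO.clm_apply_isBigO (hT : T =o[l] fun _ => (1 : ℝ)) (hv : v =O[l] g) :
    (fun x => T x (v x)) =o[l] g :=
  isBoundedBilinearMap_apply.isBigO_comp.trans_isLittleO <| by
    simpa using (hT.norm_left.mul_isBigO hv.norm_norm).norm_right

end ClmApply

section Superlinear

variable {X : Type*} [PseudoMetricSpace X] {R : X → X → Prop} {x₀ : X} {xs : ℕ → X}

theorem dist_le_pow_mul_of_step_le {c δ : ℝ} (hc₀ : 0 ≤ c) (hc₁ : c ≤ 1)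
    (hstep : ∀ x ∈ closedBall x₀ δ, ∀ y, R x y → dist y x₀ ≤ c * dist x x₀)
    (h0 : xs 0 ∈ closedBall x₀ δ) (hxs : ∀ k, R (xs k) (xs (k + 1))) (k : ℕ) :
    dist (xs k) x₀ ≤ c ^ k * dist (xs 0) x₀ := by
  induction k with
  | zero => simp
  | succ k ih =>
    have hk : xs k ∈ closedBall x₀ δ :=
      ih.trans <| (mul_le_of_le_one_left dist_nonneg (pow_le_one₀ hc₀ hc₁)).trans h0
    calc dist (xs (k + 1)) x₀ ≤ c * dist (xs k) x₀ := hstep _ hk _ (hxs k)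
      _ ≤ c * (c ^ k * dist (xs 0) x₀) := by gcongr
      _ = c ^ (k + 1) * dist (xs 0) x₀ := by ring

theorem isLittleO_dist_succ_of_step
    (hR : ∀ ε > 0, ∀ᶠ x in 𝓝 x₀, ∀ y, R x y → dist y x₀ ≤ ε * dist x x₀)
    (hxs : ∀ k, R (xs k) (xs (k + 1))) (hlim : Tendsto xs atTop (𝓝 x₀)) :
    (fun k => dist (xs (k + 1)) x₀) =o[atTop] fun k => dist (xs k) x₀ :=
  isLittleO_iff.2 fun ε hε => (hlim.eventually (hR ε hε)).mono fun k hk => by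
    simpa only [Real.norm_eq_abs, abs_dist] using hk _ (hxs k)

theorem exists_closedBall_superlinear_of_step {s : Set X} (hs : s ∈ 𝓝 x₀)
    (hR : ∀ ε > 0, ∀ᶠ x in 𝓝 x₀, ∀ y, R x y → dist y x₀ ≤ ε * dist x x₀) :
    ∃ δ > 0, closedBall x₀ δ ⊆ s ∧ ∀ xs : ℕ → X, xs 0 ∈ closedBall x₀ δ →
      (∀ k, R (xs k) (xs (k + 1))) →
      (∀ k, xs k ∈ closedBall x₀ δ) ∧ Tendsto xs atTop (𝓝 x₀) ∧
      Tendsto (fun k => dist (xs (k + 1)) x₀ / dist (xs k) x₀) atTop (𝓝 0) := by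
  obtain ⟨δ, hδ, hball⟩ := nhds_basis_closedBall.mem_iff.1 (inter_mem hs (hR (1 / 2) one_half_pos))
  refine ⟨δ, hδ, fun _ hx => (hball hx).1, fun xs h0 hxs => ?_⟩
  have hgeom := dist_le_pow_mul_of_step_le (by norm_num) (by norm_num)
    (fun x hx => (hball hx).2) h0 hxs
  have hmem : ∀ k, xs k ∈ closedBall x₀ δ := fun k =>
    (hgeom k).trans <|
      (mul_le_of_le_one_left dist_nonneg (pow_le_one₀ (by norm_num) (by norm_num))).trans h0
  have hlim : Tendsto xs atTop (𝓝 x₀) := tendsto_iff_dist_tendsto_zero.2 <|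
    squeeze_zero (fun _ => dist_nonneg) hgeom <| by
      simpa using (tendsto_pow_atTop_nhds_zero_of_lt_one (r := (1 / 2 : ℝ)) (by norm_num)
        (by norm_num)).mul_const (dist (xs 0) x₀)
  exact ⟨hmem, hlim, (isLittleO_dist_succ_of_step hR hxs hlim).tendsto_div_nhds_zero⟩

end Superlinear

section Newton

variable {𝕜 E : Type*} [NontriviallyNormedField 𝕜] [NormedAddCommGroup E] [NormedSpace 𝕜 E]
  {G : E → E} {A : E → E →L[𝕜] E} {x₀ : E}

theorem sub_eq_inverse_apply_of_newton_step {x y : E} (hx : IsUnit (A x))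
    (hy : A x (x - y) = G x) : y - x₀ = Ring.inverse (A x) (A x (x - x₀) - G x) := by
  rw [← hy, ← map_sub, sub_sub_sub_cancel_left, ← mul_apply_eq_comp,
    Ring.inverse_mul_cancel _ hx, one_apply_eq_self]

theorem isLittleO_newton_error [CompleteSpace E] (hG : HasFDerivAt G (A x₀) x₀)
    (hA : ContinuousAt A x₀) (hG₀ : G x₀ = 0) (hA₀ : IsUnit (A x₀)) :
    (fun x => Ring.inverse (A x) (A x (x - x₀) - G x)) =o[𝓝 x₀] fun x => x - x₀ := by
  obtain ⟨u, hu⟩ := hA₀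
  have hinv : (fun x => Ring.inverse (A x)) =O[𝓝 x₀] fun _ => (1 : ℝ) :=
    ((hu ▸ NormedRing.inverse_continuousAt u).comp hA).isBigO_one ℝ
  have hlin : (fun x => (A x - A x₀) (x - x₀)) =o[𝓝 x₀] fun x => x - x₀ :=
    ((isLittleO_one_iff ℝ).2 (tendsto_sub_nhds_zero_iff.2 hA)).clm_apply_isBigO (isBigO_refl _ _)
  refine hinv.clm_apply_isLittleO ((hlin.sub hG.isLittleO).congr_left fun x => ?_)
  simp only [hG₀, sub_apply]
  abel

theorem newton_local_superlinear [CompleteSpace E] (hG : HasFDerivAt G (A x₀) x₀)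
    (hA : ContinuousAt A x₀) (hG₀ : G x₀ = 0) (hA₀ : IsUnit (A x₀)) :
    ∃ δ > 0, ∀ xs : ℕ → E, xs 0 ∈ closedBall x₀ δ →
      (∀ k, A (xs k) (xs k - xs (k + 1)) = G (xs k)) →
      (∀ k, IsUnit (A (xs k))) ∧ (∀ k, xs k ∈ closedBall x₀ δ) ∧ Tendsto xs atTop (𝓝 x₀) ∧
      Tendsto (fun k => ‖xs (k + 1) - x₀‖ / ‖xs k - x₀‖) atTop (𝓝 0) := by
  have hunit : {x | IsUnit (A x)} ∈ 𝓝 x₀ := hA.preimage_mem_nhds (Units.isOpen.mem_nhds hA₀)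
  have hstep : ∀ ε > 0, ∀ᶠ x in 𝓝 x₀, ∀ y, A x (x - y) = G x → dist y x₀ ≤ ε * dist x x₀ :=
    fun ε hε => ((isLittleO_newton_error hG hA hG₀ hA₀).def hε).and hunit |>.mono
      fun x ⟨hx, hux⟩ y hy => by
        rwa [dist_eq_norm, dist_eq_norm, sub_eq_inverse_apply_of_newton_step hux hy]
  obtain ⟨δ, hδ, hsub, hconv⟩ := exists_closedBall_superlinear_of_step hunit hstep
  refine ⟨δ, hδ, fun xs h0 hxs => ?_⟩
  obtain ⟨hmem, hlim, hratio⟩ := hconv xs h0 hxs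
  simp only [dist_eq_norm] at hratio
  exact ⟨fun k => hsub (hmem k), hmem, hlim, hratio⟩

end Newton

theorem injective_of_forall_inner_pos {E : Type*} [NormedAddCommGroup E] [InnerProductSpace ℝ E]
    (T : E →L[ℝ] E) (hT : ∀ v, v ≠ 0 → 0 < inner ℝ v (T v)) : Function.Injective T :=
  (injective_iff_map_eq_zero T).2 fun v hv => by
    by_contra hne
    simpa [hv] using hT v hne

/-- Here `ψ` is `φ*`, and the Newton iteration is encoded by the relation
`H(x^k) (x^k − x^{k+1}) = g(x^k)` together with the asserted invertibility of `H(x^k)`. -/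
theorem preconditioned_newton_local_superlinear_general {n : ℕ}
    (f : EuclideanSpace ℝ (Fin n) → ℝ)
    (Hf : EuclideanSpace ℝ (Fin n) → EuclideanSpace ℝ (Fin n) →L[ℝ] EuclideanSpace ℝ (Fin n))
    (hHf : ∀ x, HasFDerivAt (gradient f) (Hf x) x) (hHfc : Continuous Hf)
    (xstar : EuclideanSpace ℝ (Fin n)) (hstat : gradient f xstar = 0)
    (μf : ℝ) (hμf : 0 < μf)
    (hPD : ∀ v : EuclideanSpace ℝ (Fin n), μf * ‖v‖ ^ 2 ≤ (inner ℝ v (Hf xstar v) : ℝ))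
    (ψ : EuclideanSpace ℝ (Fin n) → ℝ)
    (Hψ : EuclideanSpace ℝ (Fin n) → EuclideanSpace ℝ (Fin n) →L[ℝ] EuclideanSpace ℝ (Fin n))
    (hHψ : ∀ y, HasFDerivAt (gradient ψ) (Hψ y) y) (hHψc : Continuous Hψ)
    (hψ0 : gradient ψ 0 = 0)
    (hψPD : ∀ v : EuclideanSpace ℝ (Fin n), v ≠ 0 → 0 < (inner ℝ v (Hψ 0 v) : ℝ)) :
    ∃ δ > 0, ∀ x0 ∈ Metric.closedBall xstar δ,
      ∀ xs : ℕ → EuclideanSpace ℝ (Fin n), xs 0 = x0 →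
      (∀ k, ((Hψ (gradient f (xs k))).comp (Hf (xs k))) (xs k - xs (k + 1)) =
        gradient ψ (gradient f (xs k))) →
      (∀ k, Function.Bijective ((Hψ (gradient f (xs k))).comp (Hf (xs k)))) ∧
      (∀ k, xs k ∈ Metric.closedBall xstar δ) ∧
      Tendsto xs atTop (nhds xstar) ∧
      Tendsto (fun k => ‖xs (k + 1) - xstar‖ / ‖xs k - xstar‖) atTop (nhds 0) := by
  have hgrad : Continuous (gradient f) :=
    continuous_iff_continuousAt.2 fun x => (hHf x).continuousAt
  have hHf_inj : Function.Injective (Hf xstar) := injective_of_forall_inner_pos _ fun v hv =>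
    (mul_pos hμf (pow_pos (norm_pos_iff.2 hv) 2)).trans_le (hPD v)
  have hHψ_inj : Function.Injective (Hψ (gradient f xstar)) :=
    hstat ▸ injective_of_forall_inner_pos _ hψPD
  have hunit : IsUnit ((Hψ (gradient f xstar)).comp (Hf xstar)) :=
    ContinuousLinearMap.isUnit_iff_isUnit_toLinearMap.2 <|
      (LinearMap.isUnit_iff_ker_eq_bot _).2 <| LinearMap.ker_eq_bot.2 (hHψ_inj.comp hHf_inj)
  obtain ⟨δ, hδ, hconv⟩ := newton_local_superlinear
    ((hHψ (gradient f xstar)).comp xstar (hHf xstar))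
    ((hHψc.comp hgrad).clm_comp hHfc).continuousAt (by simp [hstat, hψ0]) hunit
  refine ⟨δ, hδ, fun x0 hx0 xs hxs0 hxs => ?_⟩
  obtain ⟨hunits, hrest⟩ := hconv xs (hxs0 ▸ hx0) hxs
  exact ⟨fun k => ContinuousLinearMap.isUnit_iff_bijective.1 (hunits k), hrest⟩

/-- Local Q-superlinear convergence of the nonlinearly preconditioned Newton method
`x^{k+1} = x^k − H(x^k)⁻¹ g(x^k)`, where `g(x) = ∇φ*(∇f(x))` and
`H(x) = ∇²φ*(∇f(x)) ∇²f(x)`, near a strong local minimum `x⋆` of `f`, for a twice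
continuously differentiable `φ*` (here `ψ`) with `∇ψ(0) = 0` and `∇²ψ(0) ≻ 0`.
The Newton iteration is encoded by the relation `H(x^k) (x^k − x^{k+1}) = g(x^k)`
together with the asserted invertibility (bijectivity) of `H(x^k)`. -/
theorem preconditioned_newton_local_superlinear {n : ℕ}
    (f : EuclideanSpace ℝ (Fin n) → ℝ) (hf : ContDiff ℝ 2 f)
    (Hf : EuclideanSpace ℝ (Fin n) → EuclideanSpace ℝ (Fin n) →L[ℝ] EuclideanSpace ℝ (Fin n))
    (hHf : ∀ x, HasFDerivAt (gradient f) (Hf x) x) (hHfc : Continuous Hf)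
    (xstar : EuclideanSpace ℝ (Fin n)) (hstat : gradient f xstar = 0)
    (μf : ℝ) (hμf : 0 < μf)
    (hPD : ∀ v : EuclideanSpace ℝ (Fin n), μf * ‖v‖ ^ 2 ≤ (inner ℝ v (Hf xstar v) : ℝ))
    (ψ : EuclideanSpace ℝ (Fin n) → ℝ) (hψ : ContDiff ℝ 2 ψ)
    (Hψ : EuclideanSpace ℝ (Fin n) → EuclideanSpace ℝ (Fin n) →L[ℝ] EuclideanSpace ℝ (Fin n))
    (hHψ : ∀ y, HasFDerivAt (gradient ψ) (Hψ y) y) (hHψc : Continuous Hψ)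
    (hψ0 : gradient ψ 0 = 0)
    (hψPD : ∀ v : EuclideanSpace ℝ (Fin n), v ≠ 0 → 0 < (inner ℝ v (Hψ 0 v) : ℝ)) :
    ∃ δ > 0, ∀ x0 ∈ Metric.closedBall xstar δ,
      ∀ xs : ℕ → EuclideanSpace ℝ (Fin n), xs 0 = x0 →
      (∀ k, ((Hψ (gradient f (xs k))).comp (Hf (xs k))) (xs k - xs (k + 1)) =
        gradient ψ (gradient f (xs k))) →
      (∀ k, Function.Bijective ((Hψ (gradient f (xs k))).comp (Hf (xs k)))) ∧
      (∀ k, xs k ∈ Metric.closedBall xstar δ) ∧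
      Tendsto xs atTop (nhds xstar) ∧
      Tendsto (fun k => ‖xs (k + 1) - xstar‖ / ‖xs k - xstar‖) atTop (nhds 0) :=
  preconditioned_newton_local_superlinear_general f Hf hHf hHfc xstar hstat μf hμf hPD ψ Hψ hHψ hHψc
    hψ0 hψPD
end

section
/- Let f : ℝⁿ → ℝ be twice continuously differentiable, let x⋆ ∈ ℝⁿ satisfy ∇f(x⋆) = 0 and ∇²f(x⋆) ⪰ μ_f I for some μ_f > 0, and let φ* : ℝⁿ → ℝ be twice continuously differentiable with ∇φ*(0) = 0 and ∇²φ*(0) = (1/L̃) I for some L̃ > 0. Define g(x) = ∇φ*(∇f(x)) and H(x) = ∇²φ*(∇f(x)) ∇²f(x), and assume H is L_H-Lipschitz continuous on ℝⁿ with L_H > 0, i.e., ‖H(x) − H(y)‖ ≤ L_H ‖x − y‖ (spectral norm) for all x, y. If ‖x⁰ − x⋆‖ ≤ 2 μ_f / (3 L̃ L_H), then the sequence defined by x^{k+1} = x^k − H(x^k)^{-1} g(x^k) is well defined (each H(x^k) is invertible), satisfies ‖x^k − x⋆‖ ≤ 2 μ_f / (3 L̃ L_H) for all k, and converges Q-quadratically: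 for all k ≥ 0, ‖x^{k+1} − x⋆‖ ≤ L̃ L_H ‖x^k − x⋆‖² / (2 (μ_f − L̃ L_H ‖x^k − x⋆‖)). -/
/-!
The preconditioned Newton iteration is Newton's method for the map `g = ∇φ* ∘ ∇f`, whose
derivative is `H`, and `g x⋆ = 0`. At `x⋆` the chain rule and `∇²φ*(0) = (1/L̃) I` give
`L̃ ‖H(x⋆) v‖ ≥ μ_f ‖v‖`; the Lipschitz bound on `H` keeps this coercivity, with constant
`μ_f − L̃ L_H ‖x − x⋆‖`, near `x⋆`. Comparing with `t ↦ L_H t² ‖x − x⋆‖² / 2` along the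
segment bounds `‖g x⋆ − g x − H x (x⋆ − x)‖` by `L_H/2 ‖x − x⋆‖²`, and the Newton step turns
this into the quadratic error estimate. On the ball of radius `2 μ_f / (3 L̃ L_H)` that
estimate is at most `‖x − x⋆‖`, so the iterates never leave the ball.
-/

open Set

theorem mul_norm_le_norm_apply_of_le_inner {E : Type*} [NormedAddCommGroup E]
    [InnerProductSpace ℝ E] {A : E → E} {μ : ℝ} (hA : ∀ v, μ * ‖v‖ ^ 2 ≤ inner ℝ v (A v))
    (v : E) : μ * ‖v‖ ≤ ‖A v‖ := by
  rcases eq_or_ne v 0 with rfl | hv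
  · simp
  · have hv : 0 < ‖v‖ := norm_pos_iff.2 hv
    have : μ * ‖v‖ * ‖v‖ ≤ ‖A v‖ * ‖v‖ := by
      nlinarith [hA v, real_inner_le_norm v (A v)]
    exact le_of_mul_le_mul_right this hv

section Newton

variable {E F : Type*} [NormedAddCommGroup E] [NormedSpace ℝ E]
  [NormedAddCommGroup F] [NormedSpace ℝ F]

theorem norm_sub_sub_apply_le_of_lipschitz_fderiv {g : E → F} {H : E → E →L[ℝ] F}
    (hg : ∀ x, HasFDerivAt g (H x) x) {L : ℝ} {x y : E}
    (hH : ∀ z, ‖H z - H y‖ ≤ L * ‖z - y‖) :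
    ‖g x - g y - H y (x - y)‖ ≤ L / 2 * ‖x - y‖ ^ 2 := by
  set p : ℝ → E := fun t => y + t • (x - y)
  have hp : ∀ t, HasDerivAt p (x - y) t := fun t => by
    simpa [p] using ((hasDerivAt_id t).smul_const (x - y)).const_add y
  set F : ℝ → F := fun t => g (p t) - g y - t • H y (x - y)
  have hF : ∀ t, HasDerivAt F ((H (p t) - H y) (x - y)) t := fun t => by
    have hgp := (hg (p t)).comp_hasDerivAt t (hp t)
    have := (hgp.sub_const (g y)).sub ((hasDerivAt_id' t).smul_const (H y (x - y)))
    rwa [one_smul, ← sub_apply] at this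
  have hB : ∀ t, HasDerivAt (fun t => L * ‖x - y‖ ^ 2 * (t ^ 2 / 2)) (L * ‖x - y‖ ^ 2 * t) t :=
    fun t => by simpa using ((hasDerivAt_pow 2 t).div_const 2).const_mul (L * ‖x - y‖ ^ 2)
  have hF' : ∀ t ∈ Ico (0 : ℝ) 1, ‖(H (p t) - H y) (x - y)‖ ≤ L * ‖x - y‖ ^ 2 * t := by
    intro t ht
    have hpt : ‖p t - y‖ = t * ‖x - y‖ := by simp [p, norm_smul, abs_of_nonneg ht.1]
    calc ‖(H (p t) - H y) (x - y)‖ ≤ ‖H (p t) - H y‖ * ‖x - y‖ :=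
          ContinuousLinearMap.le_opNorm _ _
      _ ≤ L * (t * ‖x - y‖) * ‖x - y‖ := by
          rw [← hpt]; exact mul_le_mul_of_nonneg_right (hH _) (norm_nonneg _)
      _ = L * ‖x - y‖ ^ 2 * t := by ring
  have key := image_norm_le_of_norm_deriv_right_le_deriv_boundary
    (fun t _ => (hF t).continuousAt.continuousWithinAt) (fun t _ => (hF t).hasDerivWithinAt)
    (by simp [F, p]) hB hF' (right_mem_Icc.2 zero_le_one)
  have hF1 : F 1 = g x - g y - H y (x - y) := by simp only [F, p, one_smul, add_sub_cancel]
  calc ‖g x - g y - H y (x - y)‖ = ‖F 1‖ := by rw [hF1]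
    _ ≤ L * ‖x - y‖ ^ 2 * (1 ^ 2 / 2) := key
    _ = L / 2 * ‖x - y‖ ^ 2 := by ring

theorem sub_mul_norm_le_mul_norm_apply {A B : E →L[ℝ] F} {μ K L r : ℝ} (hK : 0 ≤ K)
    (hB : ∀ v, μ * ‖v‖ ≤ K * ‖B v‖) (hAB : ‖A - B‖ ≤ L * r) (v : E) :
    (μ - K * L * r) * ‖v‖ ≤ K * ‖A v‖ := by
  have hBA : ‖B v‖ ≤ ‖A v‖ + L * r * ‖v‖ := calc
    ‖B v‖ ≤ ‖A v‖ + ‖(A - B) v‖ := by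
        simpa using norm_sub_le (A v) ((A - B) v)
    _ ≤ ‖A v‖ + L * r * ‖v‖ := by
        gcongr; exact ((A - B).le_opNorm v).trans (by gcongr)
  nlinarith [hB v, mul_le_mul_of_nonneg_left hBA hK]

theorem injective_of_mul_norm_le_mul_norm_apply {A : E →L[ℝ] F} {c K : ℝ} (hc : 0 < c)
    (hA : ∀ v, c * ‖v‖ ≤ K * ‖A v‖) : Function.Injective A := by
  refine (injective_iff_map_eq_zero A).2 fun v hv => norm_le_zero_iff.1 ?_
  have := hA v
  rw [hv, norm_zero, mul_zero] at this
  nlinarith [norm_nonneg v]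

theorem norm_newton_step_sub_le {g : E → F} {H : E → E →L[ℝ] F}
    (hg : ∀ x, HasFDerivAt g (H x) x) {L : ℝ} (hH : ∀ x y, ‖H x - H y‖ ≤ L * ‖x - y‖)
    {xstar : E} (hgstar : g xstar = 0) {μ K : ℝ} (hK : 0 ≤ K)
    (hHstar : ∀ v, μ * ‖v‖ ≤ K * ‖H xstar v‖) {x x' : E} (hstep : H x (x - x') = g x)
    (hx : K * L * ‖x - xstar‖ < μ) :
    ‖x' - xstar‖ ≤ K * L * ‖x - xstar‖ ^ 2 / (2 * (μ - K * L * ‖x - xstar‖)) := by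
  have hcoer := sub_mul_norm_le_mul_norm_apply hK hHstar (hH x xstar) (x' - xstar)
  have herr : H x (x' - xstar) = g xstar - g x - H x (xstar - x) := by
    rw [hgstar, ← hstep, zero_sub, ← map_neg, ← map_sub]
    congr 1
    abel
  have htaylor : ‖H x (x' - xstar)‖ ≤ L / 2 * ‖x - xstar‖ ^ 2 := by
    rw [herr, norm_sub_rev x]
    exact norm_sub_sub_apply_le_of_lipschitz_fderiv hg fun z => hH z x
  rw [le_div_iff₀ (by linarith)]
  nlinarith [hcoer, mul_le_mul_of_nonneg_left htaylor hK]

end Newton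

theorem mul_mul_lt_of_le_two_mul_div {μ K L δ : ℝ} (hμ : 0 < μ) (hK : 0 < K) (hL : 0 < L)
    (hδ : δ ≤ 2 * μ / (3 * K * L)) : K * L * δ < μ := by
  rw [le_div_iff₀ (by positivity)] at hδ
  linarith

theorem div_le_self_of_le_two_mul_div {μ K L δ : ℝ} (hμ : 0 < μ) (hK : 0 < K) (hL : 0 < L)
    (hδ0 : 0 ≤ δ) (hδ : δ ≤ 2 * μ / (3 * K * L)) :
    K * L * δ ^ 2 / (2 * (μ - K * L * δ)) ≤ δ := by
  have hKLδ := mul_mul_lt_of_le_two_mul_div hμ hK hL hδ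
  rw [le_div_iff₀ (by positivity)] at hδ
  rw [div_le_iff₀ (by linarith)]
  nlinarith

theorem preconditioned_newton_local_quadratic_general {n : ℕ}
    (f : EuclideanSpace ℝ (Fin n) → ℝ)
    (Hf : EuclideanSpace ℝ (Fin n) → EuclideanSpace ℝ (Fin n) →L[ℝ] EuclideanSpace ℝ (Fin n))
    (hHf : ∀ x, HasFDerivAt (gradient f) (Hf x) x)
    (xstar : EuclideanSpace ℝ (Fin n)) (hstat : gradient f xstar = 0)
    (μf : ℝ) (hμf : 0 < μf)
    (hPD : ∀ v : EuclideanSpace ℝ (Fin n), μf * ‖v‖ ^ 2 ≤ (inner ℝ v (Hf xstar v) : ℝ))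
    (ψ : EuclideanSpace ℝ (Fin n) → ℝ)
    (Hψ : EuclideanSpace ℝ (Fin n) → EuclideanSpace ℝ (Fin n) →L[ℝ] EuclideanSpace ℝ (Fin n))
    (hHψ : ∀ y, HasFDerivAt (gradient ψ) (Hψ y) y)
    (hψ0 : gradient ψ 0 = 0)
    (Ltil : ℝ) (hLtil : 0 < Ltil)
    (hψI : Hψ 0 = (1 / Ltil) • ContinuousLinearMap.id ℝ (EuclideanSpace ℝ (Fin n)))
    (L_H : ℝ) (hLH : 0 < L_H)
    (hLip : ∀ x y, ‖(Hψ (gradient f x)).comp (Hf x) - (Hψ (gradient f y)).comp (Hf y)‖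
      ≤ L_H * ‖x - y‖) :
    ∀ x0 : EuclideanSpace ℝ (Fin n), ‖x0 - xstar‖ ≤ 2 * μf / (3 * Ltil * L_H) →
      ∀ xs : ℕ → EuclideanSpace ℝ (Fin n), xs 0 = x0 →
      (∀ k, ((Hψ (gradient f (xs k))).comp (Hf (xs k))) (xs k - xs (k + 1)) =
        gradient ψ (gradient f (xs k))) →
      (∀ k, Function.Bijective ((Hψ (gradient f (xs k))).comp (Hf (xs k)))) ∧
      (∀ k, ‖xs k - xstar‖ ≤ 2 * μf / (3 * Ltil * L_H)) ∧
      (∀ k, ‖xs (k + 1) - xstar‖ ≤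
        Ltil * L_H * ‖xs k - xstar‖ ^ 2 / (2 * (μf - Ltil * L_H * ‖xs k - xstar‖))) := by
  intro x0 hx0 xs hxs0 hiter
  set H := fun x => (Hψ (gradient f x)).comp (Hf x)
  have hg (x) : HasFDerivAt (fun x => gradient ψ (gradient f x)) (H x) x :=
    (hHψ (gradient f x)).comp x (hHf x)
  have hHstar (v) : μf * ‖v‖ ≤ Ltil * ‖H xstar v‖ := by
    have hHv : H xstar v = (1 / Ltil) • Hf xstar v := by simp [H, hstat, hψI]
    rw [hHv, norm_smul, Real.norm_of_nonneg (by positivity), ← mul_assoc,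
      mul_one_div_cancel hLtil.ne', one_mul]
    exact mul_norm_le_norm_apply_of_le_inner hPD v
  have hsmall (k) (hk : ‖xs k - xstar‖ ≤ 2 * μf / (3 * Ltil * L_H)) :=
    mul_mul_lt_of_le_two_mul_div hμf hLtil hLH hk
  have hstep (k) (hk : ‖xs k - xstar‖ ≤ 2 * μf / (3 * Ltil * L_H)) :=
    norm_newton_step_sub_le hg hLip (by simp [hstat, hψ0]) hLtil.le hHstar (hiter k) (hsmall k hk)
  have hball (k) : ‖xs k - xstar‖ ≤ 2 * μf / (3 * Ltil * L_H) := by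
    induction k with
    | zero => rwa [hxs0]
    | succ k ih =>
      exact (hstep k ih).trans
        ((div_le_self_of_le_two_mul_div hμf hLtil hLH (norm_nonneg _) ih).trans ih)
  refine ⟨fun k => ?_, hball, fun k => hstep k (hball k)⟩
  have hinj := injective_of_mul_norm_le_mul_norm_apply (sub_pos.2 (hsmall k (hball k)))
    (sub_mul_norm_le_mul_norm_apply hLtil.le hHstar (hLip (xs k) xstar))
  exact ⟨hinj, LinearMap.injective_iff_surjective (f := (H (xs k)).toLinearMap).1 hinj⟩

/-- Local Q-quadratic convergence of the nonlinearly preconditioned Newton method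
`x^{k+1} = x^k − H(x^k)⁻¹ g(x^k)`, where `g(x) = ∇φ*(∇f(x))` and
`H(x) = ∇²φ*(∇f(x)) ∇²f(x)`, near a strong local minimum `x⋆`, when `H` is
`L_H`-Lipschitz continuous, `∇²φ*(0) = (1/L̃) I`, and
`‖x⁰ − x⋆‖ ≤ 2μ_f/(3 L̃ L_H)`. The iteration is encoded by the relation
`H(x^k) (x^k − x^{k+1}) = g(x^k)` and the asserted bijectivity of `H(x^k)`. -/
theorem preconditioned_newton_local_quadratic {n : ℕ}
    (f : EuclideanSpace ℝ (Fin n) → ℝ) (hf : ContDiff ℝ 2 f)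
    (Hf : EuclideanSpace ℝ (Fin n) → EuclideanSpace ℝ (Fin n) →L[ℝ] EuclideanSpace ℝ (Fin n))
    (hHf : ∀ x, HasFDerivAt (gradient f) (Hf x) x) (hHfc : Continuous Hf)
    (xstar : EuclideanSpace ℝ (Fin n)) (hstat : gradient f xstar = 0)
    (μf : ℝ) (hμf : 0 < μf)
    (hPD : ∀ v : EuclideanSpace ℝ (Fin n), μf * ‖v‖ ^ 2 ≤ (inner ℝ v (Hf xstar v) : ℝ))
    (ψ : EuclideanSpace ℝ (Fin n) → ℝ) (hψ : ContDiff ℝ 2 ψ)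
    (Hψ : EuclideanSpace ℝ (Fin n) → EuclideanSpace ℝ (Fin n) →L[ℝ] EuclideanSpace ℝ (Fin n))
    (hHψ : ∀ y, HasFDerivAt (gradient ψ) (Hψ y) y) (hHψc : Continuous Hψ)
    (hψ0 : gradient ψ 0 = 0)
    (Ltil : ℝ) (hLtil : 0 < Ltil)
    (hψI : Hψ 0 = (1 / Ltil) • ContinuousLinearMap.id ℝ (EuclideanSpace ℝ (Fin n)))
    (L_H : ℝ) (hLH : 0 < L_H)
    (hLip : ∀ x y, ‖(Hψ (gradient f x)).comp (Hf x) - (Hψ (gradient f y)).comp (Hf y)‖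
      ≤ L_H * ‖x - y‖) :
    ∀ x0 : EuclideanSpace ℝ (Fin n), ‖x0 - xstar‖ ≤ 2 * μf / (3 * Ltil * L_H) →
      ∀ xs : ℕ → EuclideanSpace ℝ (Fin n), xs 0 = x0 →
      (∀ k, ((Hψ (gradient f (xs k))).comp (Hf (xs k))) (xs k - xs (k + 1)) =
        gradient ψ (gradient f (xs k))) →
      (∀ k, Function.Bijective ((Hψ (gradient f (xs k))).comp (Hf (xs k)))) ∧
      (∀ k, ‖xs k - xstar‖ ≤ 2 * μf / (3 * Ltil * L_H)) ∧
      (∀ k, ‖xs (k + 1) - xstar‖ ≤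
        Ltil * L_H * ‖xs k - xstar‖ ^ 2 / (2 * (μf - Ltil * L_H * ‖xs k - xstar‖))) :=
  preconditioned_newton_local_quadratic_general f Hf hHf xstar hstat μf hμf hPD ψ Hψ hHψ hψ0 Ltil
    hLtil hψI L_H hLH hLip
end

section
/- Let f : ℝⁿ → ℝ be twice continuously differentiable and L-anisotropically smooth relative to φ with L > 0, where φ : ℝⁿ → ℝ ∪ {+∞} is proper, lower semicontinuous, strongly convex, even, with φ(0) = 0, φ ≥ 0, and φ* differentiable. Let x⋆ ∈ ℝⁿ satisfy ∇f(x⋆) = 0 and ∇²f(x⋆) ≻ 0. Let γ = α/L with α ∈ (0,1) and let σ ∈ (0,1). Suppose {x^k} is a sequence with x^k → x⋆, x^k ≠ x⋆ for all k, and {d^k} is a sequence of directions satisfying ‖x^k + d^k − x⋆‖ / ‖x^k − x⋆‖ → 0. Then there exists K ∈ ℕ such that for all k ≥ K: f(x^k + d^k) − f(x^k) ≤ −γ σ φ(∇φ*(∇f(x^k))), i.e., the unit linesearch stepsize τ_k = 1 is accepted for all sufficiently large k. -/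
open Filter

/-- The Fenchel (convex) conjugate of an extended-real-valued function on `ℝⁿ`. -/
noncomputable def fenchelConj {n : ℕ} (φ : EuclideanSpace ℝ (Fin n) → EReal)
    (y : EuclideanSpace ℝ (Fin n)) : EReal :=
  ⨆ x : EuclideanSpace ℝ (Fin n), (((inner ℝ y x : ℝ) : EReal) - φ x)

/-- Convexity for extended-real-valued functions, via the secant inequality. -/
def ERealConvexFn {n : ℕ} (ψ : EuclideanSpace ℝ (Fin n) → EReal) : Prop :=
  ∀ x y : EuclideanSpace ℝ (Fin n), ∀ t : ℝ, 0 ≤ t → t ≤ 1 →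
    ψ (t • x + (1 - t) • y) ≤ (t : EReal) * ψ x + ((1 - t : ℝ) : EReal) * ψ y

/-- `φ` is `μ`-strongly convex if `φ − (μ/2)‖·‖²` is convex. -/
def StronglyConvexEReal {n : ℕ} (μ : ℝ) (φ : EuclideanSpace ℝ (Fin n) → EReal) : Prop :=
  ERealConvexFn (fun x => φ x - ((μ / 2 * ‖x‖ ^ 2 : ℝ) : EReal))

/-- `f` is `L`-anisotropically smooth relative to `φ` (with `gradConj = ∇φ*`). -/
def AnisoSmooth {n : ℕ} (L : ℝ) (f : EuclideanSpace ℝ (Fin n) → ℝ)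
    (φ : EuclideanSpace ℝ (Fin n) → EReal)
    (gradConj : EuclideanSpace ℝ (Fin n) → EuclideanSpace ℝ (Fin n)) : Prop :=
  ∀ x xb : EuclideanSpace ℝ (Fin n),
    ((f x : ℝ) : EReal) ≤ ((f xb : ℝ) : EReal) +
      ((L⁻¹ : ℝ) : EReal) * φ (L • (x - (xb - L⁻¹ • gradConj (gradient f xb)))) -
      ((L⁻¹ : ℝ) : EReal) * φ (L • (xb - (xb - L⁻¹ • gradConj (gradient f xb))))

open Topology Asymptotics

/-! Near `x⋆`, `f - f x⋆` lies between `m‖x - x⋆‖²` and `M‖x - x⋆‖²`. The anisotropic step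
`x⁺ = x - L⁻¹ ∇φ*(∇f x)` lowers `f` by `L⁻¹ φ(∇φ*(∇f x))`; since strong convexity gives
`φ* ≤ ‖·‖² / (2μ)` and hence `‖∇φ* y‖ = O(‖y‖)`, the point `x⁺` also tends to `x⋆`, so
`f x⁺ ≥ f x⋆` and the required decrease is at most `ασ (f x - f x⋆)`. A superlinear step gives
`f (x + d) - f x⋆ ≤ M ‖x + d - x⋆‖² = o(‖x - x⋆‖²)`, which eventually drops below
`(1 - ασ)(f x - f x⋆)`. -/

section NormedAddCommGroup

variable {α G : Type*} [NormedAddCommGroup G] {l : Filter α} {u x : α → G} {a : G}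

theorem isLittleO_sub_of_tendsto_norm_div (hne : ∀ k, x k ≠ a)
    (h : Tendsto (fun k => ‖u k - a‖ / ‖x k - a‖) l (𝓝 0)) :
    (fun k => u k - a) =o[l] fun k => x k - a := by
  rw [← isLittleO_norm_norm, isLittleO_iff_tendsto']
  · exact h
  · exact .of_forall fun k hk => absurd (norm_eq_zero.mp hk) (sub_ne_zero.mpr (hne k))

theorem tendsto_of_tendsto_norm_div (hne : ∀ k, x k ≠ a)
    (h : Tendsto (fun k => ‖u k - a‖ / ‖x k - a‖) l (𝓝 0)) (hx : Tendsto x l (𝓝 a)) :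
    Tendsto u l (𝓝 a) := by
  have := (isLittleO_sub_of_tendsto_norm_div hne h).trans_tendsto
    (tendsto_sub_nhds_zero_iff.mpr hx)
  exact tendsto_sub_nhds_zero_iff.mp this

theorem eventually_sq_norm_le_of_tendsto_norm_div (hne : ∀ k, x k ≠ a)
    (h : Tendsto (fun k => ‖u k - a‖ / ‖x k - a‖) l (𝓝 0)) {ε : ℝ} (hε : 0 < ε) :
    ∀ᶠ k in l, ‖u k - a‖ ^ 2 ≤ ε * ‖x k - a‖ ^ 2 := by
  filter_upwards [((isLittleO_sub_of_tendsto_norm_div hne h).norm_norm.pow two_pos).def hε]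
    with k hk
  simpa only [norm_pow, norm_norm] using hk

theorem sub_le_neg_mul_of_quadratic_bounds {f : G → ℝ} {x y z : G} {m M κ c : ℝ}
    (hM : 0 < M) (hκ₀ : 0 ≤ κ) (hκ₁ : κ ≤ 1) (hx : m * ‖x - a‖ ^ 2 ≤ f x - f a)
    (hz : f z - f a ≤ M * ‖z - a‖ ^ 2) (hsmall : ‖z - a‖ ^ 2 ≤ (1 - κ) * m / M * ‖x - a‖ ^ 2)
    (hy : f a ≤ f y) (hdesc : f y ≤ f x - c) :
    f z - f x ≤ -κ * c :=
  calc f z - f x ≤ M * ‖z - a‖ ^ 2 - (f x - f a) := by linarith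
    _ ≤ M * ((1 - κ) * m / M * ‖x - a‖ ^ 2) - (f x - f a) := by gcongr
    _ = (1 - κ) * (m * ‖x - a‖ ^ 2) - (f x - f a) := by field_simp
    _ ≤ -κ * (f x - f a) := by nlinarith
    _ ≤ -κ * c := mul_le_mul_of_nonpos_left (by linarith) (by linarith)

end NormedAddCommGroup

section InnerProductSpace

variable {F : Type*} [NormedAddCommGroup F] [InnerProductSpace ℝ F]

theorem exists_pos_mul_sq_le_inner_of_pos [FiniteDimensional ℝ F] (H : F →L[ℝ] F)
    (hH : ∀ v, v ≠ 0 → 0 < inner ℝ v (H v)) :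
    ∃ m, 0 < m ∧ ∀ v, m * ‖v‖ ^ 2 ≤ inner ℝ v (H v) := by
  have hcont : Continuous fun v => inner ℝ v (H v) := continuous_id.inner H.continuous
  obtain ⟨m, hm, hmin⟩ := (isCompact_sphere (0 : F) 1).exists_forall_le' hcont.continuousOn
    fun v hv => hH v (ne_zero_of_mem_unit_sphere ⟨v, hv⟩)
  refine ⟨m, hm, fun v => ?_⟩
  rcases eq_or_ne v 0 with rfl | hv
  · simp
  have hnorm : ‖v‖ ≠ 0 := norm_ne_zero_iff.mpr hv
  have := hmin (‖v‖⁻¹ • v) (by simp [norm_smul, hnorm])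
  rw [map_smul, real_inner_smul_left, real_inner_smul_right, ← mul_assoc] at this
  calc m * ‖v‖ ^ 2 ≤ ‖v‖⁻¹ * ‖v‖⁻¹ * inner ℝ v (H v) * ‖v‖ ^ 2 := by gcongr
    _ = inner ℝ v (H v) := by field_simp

variable [CompleteSpace F]

theorem hasDerivAt_comp_add_smul_of_differentiableAt {g : F → ℝ} {a v : F} {t : ℝ}
    (hg : DifferentiableAt ℝ g (a + t • v)) :
    HasDerivAt (fun s : ℝ => g (a + s • v)) (inner ℝ (gradient g (a + t • v)) v) t := by
  have hline : HasDerivAt (fun s : ℝ => a + s • v) v t := by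
    simpa using ((hasDerivAt_id t).smul_const v).const_add a
  simpa [Function.comp_def] using
    (hasGradientAt_iff_hasFDerivAt.mp hg.hasGradientAt).comp_hasDerivAt t hline

theorem ConvexOn.add_inner_gradient_le {g : F → ℝ} (hconv : ConvexOn ℝ Set.univ g) {y : F}
    (hg : DifferentiableAt ℝ g y) (v : F) :
    g y + inner ℝ (gradient g y) v ≤ g (y + v) := by
  have hline : ConvexOn ℝ Set.univ fun t : ℝ => g (y + t • v) := by
    simpa [Function.comp_def, AffineMap.lineMap_apply, add_comm]
      using hconv.comp_affineMap (AffineMap.lineMap y (y + v))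
  have hderiv := hasDerivAt_comp_add_smul_of_differentiableAt (a := y) (v := v) (t := 0)
    (by rwa [zero_smul, add_zero])
  rw [zero_smul, add_zero] at hderiv
  have := hline.le_slope_of_hasDerivAt (Set.mem_univ 0) (Set.mem_univ 1) zero_lt_one hderiv
  simp only [slope_def_field, zero_smul, add_zero, one_smul, sub_zero, div_one] at this
  linarith

theorem ConvexOn.norm_gradient_le {g : F → ℝ} (hconv : ConvexOn ℝ Set.univ g) {μ : ℝ}
    (hμ : 0 < μ) (hub : ∀ z, g z ≤ ‖z‖ ^ 2 / (2 * μ)) {y : F} (hg : DifferentiableAt ℝ g y)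
    (hnonneg : 0 ≤ g y) : ‖gradient g y‖ ≤ 3 / μ * ‖y‖ := by
  set u := gradient g y
  have hfirst := hconv.add_inner_gradient_le hg (μ • u)
  rw [real_inner_smul_right, real_inner_self_eq_norm_sq] at hfirst
  have hnorm : ‖y + μ • u‖ ≤ ‖y‖ + μ * ‖u‖ := by
    simpa [norm_smul, abs_of_pos hμ] using norm_add_le y (μ • u)
  have hquad : μ * ‖u‖ ^ 2 ≤ (‖y‖ + μ * ‖u‖) ^ 2 / (2 * μ) :=
    calc μ * ‖u‖ ^ 2 ≤ g (y + μ • u) := by linarith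
      _ ≤ ‖y + μ • u‖ ^ 2 / (2 * μ) := hub _
      _ ≤ (‖y‖ + μ * ‖u‖) ^ 2 / (2 * μ) := by gcongr
  rw [le_div_iff₀ (by positivity)] at hquad
  rw [div_mul_eq_mul_div, le_div_iff₀ hμ]
  nlinarith [norm_nonneg u, norm_nonneg y, mul_nonneg hμ.le (norm_nonneg u)]

theorem isLittleO_sub_taylor_two {f : F → ℝ} (hf : Differentiable ℝ f) {a : F}
    {H : F →L[ℝ] F} (hH : HasFDerivAt (gradient f) H a) :
    (fun z => f z - f a - inner ℝ (gradient f a) (z - a) - inner ℝ (z - a) (H (z - a)) / 2)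
      =o[𝓝 a] fun z => ‖z - a‖ ^ 2 := by
  refine isLittleO_iff.mpr fun ε hε => ?_
  obtain ⟨r, hr, hball⟩ := Metric.eventually_nhds_iff_ball.mp (hH.isLittleO.def hε)
  filter_upwards [Metric.ball_mem_nhds a hr] with z hz
  set Δ := z - a
  set q := inner ℝ Δ (H Δ)
  set g : ℝ → ℝ := fun t => f (a + t • Δ) - t * inner ℝ (gradient f a) Δ - t ^ 2 / 2 * q
  set g' : ℝ → ℝ := fun t => inner ℝ (gradient f (a + t • Δ) - gradient f a - H (t • Δ)) Δ
  have hderiv : ∀ t, HasDerivAt g (g' t) t := by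
    intro t
    have := (((hasDerivAt_comp_add_smul_of_differentiableAt (a := a) (v := Δ) (hf _)).sub
      ((hasDerivAt_id t).mul_const (inner ℝ (gradient f a) Δ))).sub
      (((hasDerivAt_pow 2 t).div_const 2).mul_const q))
    refine (this : HasDerivAt g _ t).congr_deriv ?_
    simp only [g', inner_sub_left, map_smul, real_inner_smul_left, q, real_inner_comm Δ (H Δ)]
    push_cast
    ring
  have hbound : ∀ t ∈ Set.Ico (0 : ℝ) 1, ‖g' t‖ ≤ ε * ‖Δ‖ ^ 2 := by
    rintro t ⟨ht0, ht1⟩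
    have htΔ : ‖t • Δ‖ ≤ ‖Δ‖ := by
      rw [norm_smul, Real.norm_of_nonneg ht0]
      exact mul_le_of_le_one_left (norm_nonneg _) ht1.le
    have hmem : a + t • Δ ∈ Metric.ball a r := by
      rw [Metric.mem_ball, dist_eq_norm, add_sub_cancel_left]
      exact htΔ.trans_lt (by simpa [dist_eq_norm] using hz)
    have herr := hball _ hmem
    rw [add_sub_cancel_left] at herr
    calc ‖g' t‖ ≤ ‖gradient f (a + t • Δ) - gradient f a - H (t • Δ)‖ * ‖Δ‖ :=
          by simpa only [Real.norm_eq_abs] using abs_real_inner_le_norm _ _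
      _ ≤ ε * ‖Δ‖ * ‖Δ‖ := by gcongr; exact herr.trans (by gcongr)
      _ = ε * ‖Δ‖ ^ 2 := by ring
  have := norm_image_sub_le_of_norm_deriv_le_segment'
    (fun t _ => (hderiv t).hasDerivWithinAt) hbound 1 (Set.right_mem_Icc.mpr zero_le_one)
  have hg : g 1 - g 0 = f z - f a - inner ℝ (gradient f a) Δ - q / 2 := by
    simp only [g, zero_smul, add_zero, one_smul, Δ, add_sub_cancel]
    ring
  rw [hg, sub_zero, mul_one] at this
  simpa only [Real.norm_eq_abs, abs_pow, abs_norm] using this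

theorem eventually_quadratic_bounds {f : F → ℝ} (hf : Differentiable ℝ f) {a : F}
    (hstat : gradient f a = 0) {H : F →L[ℝ] F} (hH : HasFDerivAt (gradient f) H a) {m : ℝ}
    (hm : 0 < m) (hcoer : ∀ v, m * ‖v‖ ^ 2 ≤ inner ℝ v (H v)) :
    ∃ M, 0 < M ∧ ∀ᶠ z in 𝓝 a, m / 4 * ‖z - a‖ ^ 2 ≤ f z - f a ∧
      f z - f a ≤ M * ‖z - a‖ ^ 2 := by
  refine ⟨‖H‖ / 2 + m / 4, by positivity, ?_⟩
  filter_upwards [(isLittleO_sub_taylor_two hf hH).def (c := m / 4) (by positivity)] with z hz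
  rw [hstat, inner_zero_left, sub_zero, Real.norm_eq_abs, norm_pow, norm_norm] at hz
  have hlower := hcoer (z - a)
  have hupper : inner ℝ (z - a) (H (z - a)) ≤ ‖H‖ * ‖z - a‖ ^ 2 :=
    (real_inner_le_norm _ _).trans (by nlinarith [H.le_opNorm (z - a), norm_nonneg (z - a)])
  constructor <;> linarith [abs_le.mp hz]

theorem tendsto_sub_smul_comp_gradient {α : Type*} {l : Filter α} {f : F → ℝ} {a : F}
    (hcont : ContinuousAt (gradient f) a) (hstat : gradient f a = 0) {G : F → F} {C : ℝ}
    (hG : ∀ v, ‖G v‖ ≤ C * ‖v‖) {x : α → F} (hx : Tendsto x l (𝓝 a)) (t : ℝ) :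
    Tendsto (fun k => x k - t • G (gradient f (x k))) l (𝓝 a) := by
  have hgrad : Tendsto (fun k => gradient f (x k)) l (𝓝 0) := hstat ▸ hcont.tendsto.comp hx
  have hG₀ : Tendsto (fun k => G (gradient f (x k))) l (𝓝 0) :=
    squeeze_zero_norm (fun k => hG _) (by simpa using hgrad.norm.const_mul C)
  simpa using hx.sub (hG₀.const_smul t)

end InnerProductSpace

section EuclideanSpace

variable {n : ℕ} {φ : EuclideanSpace ℝ (Fin n) → EReal}

local notation "E" => EuclideanSpace ℝ (Fin n)

theorem StronglyConvexEReal.quadratic_le {μ : ℝ} (hsc : StronglyConvexEReal μ φ)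
    (heven : ∀ x, φ (-x) = φ x) (hzero : φ 0 = 0) (x : E) :
    ((μ / 2 * ‖x‖ ^ 2 : ℝ) : EReal) ≤ φ x := by
  have hmid := hsc x (-x) (1 / 2) (by norm_num) (by norm_num)
  have hmid_pt : (1 / 2 : ℝ) • x + (1 - 1 / 2 : ℝ) • -x = 0 := by module
  dsimp only at hmid
  rw [hmid_pt, hzero, heven, norm_neg, ← EReal.right_distrib_of_nonneg (by norm_num) (by norm_num),
    ← EReal.coe_add] at hmid
  norm_num at hmid
  exact (EReal.sub_nonneg (Or.inr (EReal.coe_ne_top _)) (Or.inr (EReal.coe_ne_bot _))).mp hmid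

theorem sub_le_fenchelConj (y x : E) : ((inner ℝ y x : ℝ) : EReal) - φ x ≤ fenchelConj φ y :=
  le_iSup (fun x => ((inner ℝ y x : ℝ) : EReal) - φ x) x

theorem fenchelConj_nonneg (hzero : φ 0 = 0) (y : E) : 0 ≤ fenchelConj φ y := by
  simpa [hzero] using sub_le_fenchelConj (φ := φ) y 0

theorem fenchelConj_le_of_quadratic_le {μ : ℝ} (hμ : 0 < μ)
    (hφ : ∀ x, ((μ / 2 * ‖x‖ ^ 2 : ℝ) : EReal) ≤ φ x) (y : E) :
    fenchelConj φ y ≤ ((‖y‖ ^ 2 / (2 * μ) : ℝ) : EReal) := by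
  refine iSup_le fun x => (EReal.sub_le_sub le_rfl (hφ x)).trans ?_
  rw [← EReal.coe_sub, EReal.coe_le_coe_iff, le_div_iff₀ (by positivity)]
  nlinarith [real_inner_le_norm y x, sq_nonneg (μ * ‖x‖ - ‖y‖), norm_nonneg x, norm_nonneg y]

theorem convexOn_of_coe_eq_fenchelConj {φs : E → ℝ}
    (hφs : ∀ y, (φs y : EReal) = fenchelConj φ y) : ConvexOn ℝ Set.univ φs := by
  refine ⟨convex_univ, fun y₁ _ y₂ _ a b ha hb hab => ?_⟩
  rw [← EReal.coe_le_coe_iff, hφs]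
  refine iSup_le fun x => ?_
  rcases eq_or_ne (φ x) ⊤ with htop | htop
  · simp [htop]
  have hbot : φ x ≠ ⊥ := fun hx => by simpa [hx, ← hφs] using sub_le_fenchelConj (φ := φ) y₁ x
  lift φ x to ℝ using ⟨htop, hbot⟩ with c hc
  have hle : ∀ y, inner ℝ y x - c ≤ φs y := fun y => by
    simpa [← hc, ← hφs, ← EReal.coe_sub] using sub_le_fenchelConj (φ := φ) y x
  rw [← EReal.coe_sub, EReal.coe_le_coe_iff, inner_add_left, real_inner_smul_left,
    real_inner_smul_left, smul_eq_mul, smul_eq_mul]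
  have hc_comb : c = a * c + b * c := by rw [← add_mul, hab, one_mul]
  nlinarith [mul_le_mul_of_nonneg_left (hle y₁) ha, mul_le_mul_of_nonneg_left (hle y₂) hb]

theorem norm_gradient_le_of_coe_eq_fenchelConj {μ : ℝ} (hμ : 0 < μ)
    (hφ : ∀ x, ((μ / 2 * ‖x‖ ^ 2 : ℝ) : EReal) ≤ φ x) (hzero : φ 0 = 0) {φs : E → ℝ}
    (hφs : ∀ y, (φs y : EReal) = fenchelConj φ y) (hdiff : Differentiable ℝ φs) (y : E) :
    ‖gradient φs y‖ ≤ 3 / μ * ‖y‖ :=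
  (convexOn_of_coe_eq_fenchelConj hφs).norm_gradient_le hμ
    (fun z => EReal.coe_le_coe_iff.mp ((hφs z).trans_le (fenchelConj_le_of_quadratic_le hμ hφ z)))
    (hdiff y) (EReal.coe_nonneg.mp ((hφs y).symm ▸ fenchelConj_nonneg hzero y))

theorem AnisoSmooth.exists_descent {L : ℝ} (hL : 0 < L) {f : E → ℝ} {g : E → E}
    (haniso : AnisoSmooth L f φ g) (hzero : φ 0 = 0) (hbot : ∀ x, φ x ≠ ⊥) (x : E) :
    ∃ c : ℝ, φ (g (gradient f x)) = c ∧ f (x - L⁻¹ • g (gradient f x)) ≤ f x - L⁻¹ * c := by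
  set u := g (gradient f x) with hu
  have h := haniso (x - L⁻¹ • u) x
  rw [← hu, sub_self, smul_zero, hzero, mul_zero, add_zero, sub_sub_cancel, smul_smul,
    mul_inv_cancel₀ hL.ne', one_smul] at h
  rcases eq_or_ne (φ u) ⊤ with htop | htop
  · rw [htop, EReal.coe_mul_top_of_pos (inv_pos.mpr hL), EReal.sub_top] at h
    exact absurd h (not_le.mpr (EReal.bot_lt_coe _))
  lift φ u to ℝ using ⟨htop, hbot u⟩ with c hc
  refine ⟨c, rfl, ?_⟩
  rwa [← EReal.coe_mul, ← EReal.coe_sub, EReal.coe_le_coe_iff] at h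

end EuclideanSpace

theorem eventual_unit_stepsize_general {n : ℕ} (μ : ℝ) (hμ : 0 < μ)
    (φ : EuclideanSpace ℝ (Fin n) → EReal)
    (hsc : StronglyConvexEReal μ φ)
    (heven : ∀ x, φ (-x) = φ x) (hzero : φ 0 = 0)
    (φs : EuclideanSpace ℝ (Fin n) → ℝ)
    (hφs : ∀ y, (φs y : EReal) = fenchelConj φ y)
    (hφsdiff : Differentiable ℝ φs)
    (f : EuclideanSpace ℝ (Fin n) → ℝ) (hf : ContDiff ℝ 2 f)
    (L : ℝ) (hL : 0 < L)
    (haniso : AnisoSmooth L f φ (gradient φs))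
    (xstar : EuclideanSpace ℝ (Fin n)) (hstat : gradient f xstar = 0)
    (Hf : EuclideanSpace ℝ (Fin n) →L[ℝ] EuclideanSpace ℝ (Fin n))
    (hHf : HasFDerivAt (gradient f) Hf xstar)
    (hPD : ∀ v : EuclideanSpace ℝ (Fin n), v ≠ 0 → 0 < (inner ℝ v (Hf v) : ℝ))
    (α σ : ℝ) (hα : 0 < α) (hα' : α < 1) (hσ : 0 < σ) (hσ' : σ < 1)
    (x d : ℕ → EuclideanSpace ℝ (Fin n))
    (hne : ∀ k, x k ≠ xstar)
    (hconv : Tendsto x atTop (nhds xstar))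
    (hsuperlin : Tendsto (fun k => ‖x k + d k - xstar‖ / ‖x k - xstar‖) atTop (nhds 0)) :
    ∃ K : ℕ, ∀ k ≥ K, ((f (x k + d k) - f (x k) : ℝ) : EReal) ≤
      -((α / L * σ : ℝ) : EReal) * φ (gradient φs (gradient f (x k))) := by
  have hφ := hsc.quadratic_le heven hzero
  obtain ⟨m, hm, hcoer⟩ := exists_pos_mul_sq_le_inner_of_pos Hf hPD
  obtain ⟨M, hM, hgrowth⟩ :=
    eventually_quadratic_bounds (hf.differentiable two_ne_zero) hstat hHf hm hcoer
  have hstep := tendsto_sub_smul_comp_gradient hHf.continuousAt hstat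
    (norm_gradient_le_of_coe_eq_fenchelConj hμ hφ hzero hφs hφsdiff) hconv L⁻¹
  have hnewton := tendsto_of_tendsto_norm_div hne hsuperlin hconv
  have hκ : α * σ < 1 := by nlinarith
  have hsmall := eventually_sq_norm_le_of_tendsto_norm_div hne hsuperlin
    (ε := (1 - α * σ) * (m / 4) / M) (div_pos (mul_pos (by linarith) (by positivity)) hM)
  obtain ⟨K, hK⟩ := eventually_atTop.mp ((hconv.eventually hgrowth).and
    ((hnewton.eventually hgrowth).and ((hstep.eventually hgrowth).and hsmall)))
  refine ⟨K, fun k hk => ?_⟩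
  obtain ⟨⟨hx, -⟩, ⟨-, hxd⟩, ⟨hy, -⟩, hsmall⟩ := hK k hk
  obtain ⟨c, hc, hdesc⟩ := haniso.exists_descent hL hzero
    (fun z => ne_bot_of_le_ne_bot (EReal.coe_ne_bot _) (hφ z)) (x k)
  rw [hc, ← EReal.coe_neg, ← EReal.coe_mul, EReal.coe_le_coe_iff,
    show -(α / L * σ) * c = -(α * σ) * (L⁻¹ * c) by ring]
  exact sub_le_neg_mul_of_quadratic_bounds hM (by positivity) hκ.le hx hxd hsmall
    (sub_nonneg.mp ((by positivity : (0 : ℝ) ≤ _).trans hy)) hdesc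

/-- Eventual acceptance of the unit stepsize in the globalized preconditioned
Newton method: if `x^k → x⋆` (a strong local minimum of the anisotropically
smooth `f`), `x^k ≠ x⋆`, and the directions `d^k` are superlinear, i.e.
`‖x^k + d^k − x⋆‖/‖x^k − x⋆‖ → 0`, then for all sufficiently large `k` the unit
step satisfies the sufficient decrease condition
`f(x^k + d^k) − f(x^k) ≤ −γ σ φ(∇φ*(∇f(x^k)))` with `γ = α/L`. -/
theorem eventual_unit_stepsize {n : ℕ} (μ : ℝ) (hμ : 0 < μ)
    (φ : EuclideanSpace ℝ (Fin n) → EReal)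
    (hproper_ne_top : ∃ x, φ x ≠ ⊤) (hproper_ne_bot : ∀ x, φ x ≠ ⊥)
    (hlsc : LowerSemicontinuous φ)
    (hsc : StronglyConvexEReal μ φ)
    (heven : ∀ x, φ (-x) = φ x) (hzero : φ 0 = 0)
    (hnonneg : ∀ z, 0 ≤ φ z)
    (φs : EuclideanSpace ℝ (Fin n) → ℝ)
    (hφs : ∀ y, (φs y : EReal) = fenchelConj φ y)
    (hφsdiff : Differentiable ℝ φs)
    (f : EuclideanSpace ℝ (Fin n) → ℝ) (hf : ContDiff ℝ 2 f)
    (L : ℝ) (hL : 0 < L)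
    (haniso : AnisoSmooth L f φ (gradient φs))
    (xstar : EuclideanSpace ℝ (Fin n)) (hstat : gradient f xstar = 0)
    (Hf : EuclideanSpace ℝ (Fin n) →L[ℝ] EuclideanSpace ℝ (Fin n))
    (hHf : HasFDerivAt (gradient f) Hf xstar)
    (hPD : ∀ v : EuclideanSpace ℝ (Fin n), v ≠ 0 → 0 < (inner ℝ v (Hf v) : ℝ))
    (α σ : ℝ) (hα : 0 < α) (hα' : α < 1) (hσ : 0 < σ) (hσ' : σ < 1)
    (x d : ℕ → EuclideanSpace ℝ (Fin n))
    (hne : ∀ k, x k ≠ xstar)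
    (hconv : Tendsto x atTop (nhds xstar))
    (hsuperlin : Tendsto (fun k => ‖x k + d k - xstar‖ / ‖x k - xstar‖) atTop (nhds 0)) :
    ∃ K : ℕ, ∀ k ≥ K, ((f (x k + d k) - f (x k) : ℝ) : EReal) ≤
      -((α / L * σ : ℝ) : EReal) * φ (gradient φs (gradient f (x k))) :=
  eventual_unit_stepsize_general μ hμ φ hsc heven hzero φs hφs hφsdiff f hf L hL haniso xstar hstat
    Hf hHf hPD α σ hα hα' hσ hσ' x d hne hconv hsuperlin
end

section
/- Let A ∈ ℝ^{n×n} be symmetric, M ∈ ℝ^{n×n} symmetric positive definite, g ∈ ℝⁿ with g ≠ 0, and σ > 0. Then there exists a pair (s⋆, λ⋆) ∈ ℝⁿ × ℝ satisfying simultaneously: (A + λ⋆ M) s⋆ = −M g, λ⋆ = σ ‖s⋆‖, and A + λ⋆ M ⪰ 0 (positive semidefinite). -/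
/-!
Writing `M = Bᴴ B` and diagonalizing `B⁻ᴴ A B⁻¹` gives `A + t M = Qᴴ (diag d + t) Q` for all `t`
with `Q` invertible, so with `y = Q s` the problem becomes: find `y`, `λ` with
`(dᵢ + λ) yᵢ = -cᵢ`, `λ = σ ‖T y‖` and `d + λ ≥ 0`, where `T = Q⁻¹` is a fixed isomorphism.

Let `λ_L = max 0 (max (-d))`. For `t > λ_L` the solution `y(t) = -c / (d + t)` is continuous and
`σ ‖T y(t)‖ - t → -∞`, so if this is ever `≥ 0` the intermediate value theorem finishes.
Otherwise (the hard case) `σ ‖T y(t)‖ < t` keeps `y(t)` bounded as `t ↓ λ_L`, which forces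
`cᵢ = 0` whenever `dᵢ + λ_L = 0`; then `y(t) → y(λ_L)` and `σ ‖T y(λ_L)‖ ≤ λ_L`. If this is
strict, `λ_L > 0`, so `diag d + λ_L` is singular and adding a multiple of a kernel vector to
`y(λ_L)` raises `σ ‖T y‖` to exactly `λ_L`.
-/

open Matrix Filter Topology Set

theorem exists_norm_add_smul_eq {E : Type*} [NormedAddCommGroup E] [NormedSpace ℝ E]
    {v w : E} {r : ℝ} (hw : w ≠ 0) (hv : ‖v‖ ≤ r) : ∃ τ : ℝ, ‖v + τ • w‖ = r := by
  set τ₀ := (r + ‖v‖) / ‖w‖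
  have hτ₀ : 0 ≤ τ₀ := div_nonneg (by linarith [norm_nonneg v]) (norm_nonneg w)
  have hr : r ≤ ‖v + τ₀ • w‖ := calc
    r = τ₀ * ‖w‖ - ‖v‖ := by rw [div_mul_cancel₀ _ (norm_ne_zero_iff.mpr hw)]; ring
    _ = ‖τ₀ • w‖ - ‖v‖ := by rw [norm_smul, Real.norm_of_nonneg hτ₀]
    _ ≤ ‖v + τ₀ • w‖ := add_comm v _ ▸ norm_sub_le_norm_add _ _
  obtain ⟨τ, -, hτ⟩ := intermediate_value_Icc hτ₀
    (by fun_prop : Continuous fun τ : ℝ => ‖v + τ • w‖).continuousOn ⟨by simpa using hv, hr⟩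
  exact ⟨τ, hτ⟩

section DiagonalProblem

variable {ι : Type*} (d c : ι → ℝ)

/-- The least `t ≥ 0` with `diagonal d + t • 1` positive semidefinite. -/
noncomputable def psdShift : ℝ := max 0 (⨆ i, -d i)

/-- Where `d i + t = 0` the junk value `x / 0 = 0` makes this the right limit when `c i = 0`. -/
noncomputable def diagSolve (t : ℝ) : ι → ℝ := fun i => -c i / (d i + t)

variable {d c}

theorem psdShift_nonneg : 0 ≤ psdShift d := le_max_left _ _

theorem add_psdShift_nonneg [Finite ι] (i : ι) : 0 ≤ d i + psdShift d := by
  have := (le_ciSup (finite_range fun i => -d i).bddAbove i).trans (le_max_right 0 _)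
  rw [psdShift]; linarith

theorem add_pos_of_psdShift_lt [Finite ι] {t : ℝ} (ht : psdShift d < t) (i : ι) :
    0 < d i + t := by
  linarith [add_psdShift_nonneg (d := d) i]

theorem exists_add_psdShift_eq_zero [Finite ι] (h : 0 < psdShift d) :
    ∃ i, d i + psdShift d = 0 := by
  have hsup : 0 < ⨆ i, -d i := by simpa [psdShift] using h
  have : Nonempty ι := not_isEmpty_iff.mp fun _ => by simp at hsup
  obtain ⟨i, hi⟩ := exists_eq_ciSup_of_finite (f := fun i => -d i)
  exact ⟨i, by rw [psdShift, max_eq_right hsup.le, ← hi]; ring⟩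

theorem add_mul_diagSolve {t : ℝ} {i : ι} (h : d i + t = 0 → c i = 0) :
    (d i + t) * diagSolve d c t i = -c i := by
  by_cases hi : d i + t = 0
  · simp [diagSolve, hi, h hi]
  · simp only [diagSolve]; field_simp

theorem continuousAt_diagSolve {t : ℝ} (h : ∀ i, d i + t = 0 → c i = 0) :
    ContinuousAt (diagSolve d c) t := by
  refine continuousAt_pi.mpr fun i => ?_
  by_cases hi : d i + t = 0
  · simp only [diagSolve, h i hi, neg_zero, zero_div]; exact continuousAt_const
  · exact continuousAt_const.div (by fun_prop) hi

variable [Fintype ι] {E : Type*} [NormedAddCommGroup E] [NormedSpace ℝ E] {σ : ℝ}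

theorem norm_diagSolve_le {t : ℝ} (ht : psdShift d < t) :
    ‖diagSolve d c t‖ ≤ ‖c‖ / (t - psdShift d) := by
  refine (pi_norm_le_iff_of_nonneg (by have := norm_nonneg c; positivity)).mpr fun i => ?_
  have hle : t - psdShift d ≤ d i + t := by linarith [add_psdShift_nonneg (d := d) i]
  rw [diagSolve, norm_div, norm_neg, Real.norm_of_nonneg (show 0 ≤ d i + t by linarith)]
  exact div_le_div₀ (norm_nonneg c) (norm_le_pi_norm c i) (by linarith) hle

theorem eventually_mul_norm_diagSolve_le (T : (ι → ℝ) →L[ℝ] E) :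
    ∀ᶠ t in atTop, σ * ‖T (diagSolve d c t)‖ ≤ t := by
  set K := |σ| * ‖T‖ * ‖c‖
  have hK : 0 ≤ K := by positivity
  filter_upwards [eventually_ge_atTop (psdShift d + 1 + K)] with t ht
  have hgap : 1 ≤ t - psdShift d := by linarith
  calc σ * ‖T (diagSolve d c t)‖ ≤ |σ| * (‖T‖ * ‖diagSolve d c t‖) :=
        mul_le_mul (le_abs_self σ) (T.le_opNorm _) (norm_nonneg _) (abs_nonneg σ)
    _ ≤ |σ| * (‖T‖ * (‖c‖ / (t - psdShift d))) := by
        gcongr; exact norm_diagSolve_le (by linarith)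
    _ = K / (t - psdShift d) := by ring
    _ ≤ K := div_le_self hK hgap
    _ ≤ t := by linarith [psdShift_nonneg (d := d)]

theorem exists_diagSolution_of_le (T : (ι → ℝ) →L[ℝ] E) {t₁ : ℝ}
    (ht₁ : psdShift d < t₁) (h : t₁ ≤ σ * ‖T (diagSolve d c t₁)‖) :
    ∃ (y : ι → ℝ) (lam : ℝ),
      (∀ i, (d i + lam) * y i = -c i) ∧ lam = σ * ‖T y‖ ∧ ∀ i, 0 ≤ d i + lam := by
  obtain ⟨t₂, ht₂, ht₁₂⟩ := ((eventually_mul_norm_diagSolve_le (d := d) (c := c) (σ := σ) T).and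
    (eventually_ge_atTop t₁)).exists
  have hcont : ContinuousOn (fun t => σ * ‖T (diagSolve d c t)‖ - t) (Icc t₁ t₂) := by
    refine fun t ht => ContinuousAt.continuousWithinAt ?_
    have := continuousAt_diagSolve (c := c) fun i hi =>
      absurd hi (add_pos_of_psdShift_lt (ht₁.trans_le ht.1) i).ne'
    fun_prop
  obtain ⟨t, ht, hzero⟩ := intermediate_value_Icc' ht₁₂ hcont
    (show (0 : ℝ) ∈ Icc _ _ from ⟨by linarith, by linarith⟩)
  have hpos := add_pos_of_psdShift_lt (ht₁.trans_le ht.1)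
  exact ⟨diagSolve d c t, t, fun i => add_mul_diagSolve fun hi => absurd hi (hpos i).ne',
    by linarith only [hzero], fun i => (hpos i).le⟩

theorem eq_zero_of_forall_mul_norm_diagSolve_lt (T : (ι → ℝ) ≃L[ℝ] E) (hσ : 0 < σ)
    (h : ∀ t, psdShift d < t → σ * ‖T (diagSolve d c t)‖ < t) {i : ι}
    (hi : d i + psdShift d = 0) : c i = 0 := by
  set lb := psdShift d
  set C := ‖(T.symm : E →L[ℝ] ι → ℝ)‖
  have hbound : ∀ t, lb < t → |c i| ≤ (t - lb) * (C * (t / σ)) := by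
    intro t ht
    set y := diagSolve d c t
    have hdi : d i + t = t - lb := by linarith
    have hyi : |y i| ≤ C * (t / σ) := calc
      |y i| ≤ ‖y‖ := norm_le_pi_norm y i
      _ = ‖T.symm (T y)‖ := by rw [T.symm_apply_apply]
      _ ≤ C * ‖T y‖ := (T.symm : E →L[ℝ] ι → ℝ).le_opNorm _
      _ ≤ C * (t / σ) := by
        gcongr; rw [le_div_iff₀ hσ, mul_comm]; exact (h t ht).le
    calc |c i| = (t - lb) * |y i| := by
          rw [← abs_neg, ← add_mul_diagSolve (d := d) (c := c) (t := t) fun h0 =>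
            absurd h0 (by linarith), hdi, abs_mul, abs_of_pos (by linarith)]
      _ ≤ (t - lb) * (C * (t / σ)) := mul_le_mul_of_nonneg_left hyi (by linarith)
  have hlim : Tendsto (fun t => (t - lb) * (C * (t / σ))) (𝓝[>] lb) (𝓝 0) := by
    have : Tendsto (fun t => (t - lb) * (C * (t / σ))) (𝓝 lb) (𝓝 ((lb - lb) * (C * (lb / σ)))) :=
      (by fun_prop : Continuous fun t => (t - lb) * (C * (t / σ))).tendsto lb
    simpa using this.mono_left nhdsWithin_le_nhds
  exact abs_nonpos_iff.mp <| ge_of_tendsto hlim <| eventually_nhdsWithin_of_forall hbound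

theorem mul_norm_diagSolve_psdShift_le (T : (ι → ℝ) →L[ℝ] E)
    (h : ∀ t, psdShift d < t → σ * ‖T (diagSolve d c t)‖ < t)
    (hc : ∀ i, d i + psdShift d = 0 → c i = 0) :
    σ * ‖T (diagSolve d c (psdShift d))‖ ≤ psdShift d := by
  have hcont : ContinuousAt (fun t => σ * ‖T (diagSolve d c t)‖) (psdShift d) := by
    have := continuousAt_diagSolve hc
    fun_prop
  exact le_of_tendsto_of_tendsto (hcont.tendsto.mono_left (nhdsWithin_le_nhds (s := Ioi _)))
    (tendsto_id.mono_left nhdsWithin_le_nhds)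
    (eventually_nhdsWithin_of_forall fun t ht => (h t ht).le)

theorem exists_diagSolution_of_forall_lt (T : (ι → ℝ) ≃L[ℝ] E) (hσ : 0 < σ)
    (h : ∀ t, psdShift d < t → σ * ‖T (diagSolve d c t)‖ < t) :
    ∃ (y : ι → ℝ) (lam : ℝ),
      (∀ i, (d i + lam) * y i = -c i) ∧ lam = σ * ‖T y‖ ∧ ∀ i, 0 ≤ d i + lam := by
  classical
  set lb := psdShift d
  have hc : ∀ i, d i + lb = 0 → c i = 0 := fun i =>
    eq_zero_of_forall_mul_norm_diagSolve_lt T hσ h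
  set y₀ := diagSolve d c lb
  have hy₀ : ∀ i, (d i + lb) * y₀ i = -c i := fun i => add_mul_diagSolve (hc i)
  rcases (mul_norm_diagSolve_psdShift_le (T : (ι → ℝ) →L[ℝ] E) h hc).eq_or_lt with heq | hlt
  · exact ⟨y₀, lb, hy₀, heq.symm, add_psdShift_nonneg⟩
  obtain ⟨i₀, hi₀⟩ := exists_add_psdShift_eq_zero (hlt.trans_le' (by positivity))
  obtain ⟨τ, hτ⟩ := exists_norm_add_smul_eq (v := T y₀) (w := T (Pi.single i₀ 1)) (r := lb / σ)
    (by simp) (by rw [le_div_iff₀ hσ, mul_comm]; exact hlt.le)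
  refine ⟨y₀ + τ • Pi.single i₀ 1, lb, fun i => ?_, ?_, add_psdShift_nonneg⟩
  · rcases eq_or_ne i i₀ with rfl | hi
    · rw [show d i + lb = 0 from hi₀, zero_mul, hc i hi₀, neg_zero]
    · simpa [hi] using hy₀ i
  · rw [map_add, map_smul, hτ]; field_simp

theorem exists_diagSolution (T : (ι → ℝ) ≃L[ℝ] E) (hσ : 0 < σ) :
    ∃ (y : ι → ℝ) (lam : ℝ),
      (∀ i, (d i + lam) * y i = -c i) ∧ lam = σ * ‖T y‖ ∧ ∀ i, 0 ≤ d i + lam := by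
  by_cases h : ∃ t, psdShift d < t ∧ t ≤ σ * ‖T (diagSolve d c t)‖
  · obtain ⟨t, ht, hle⟩ := h
    exact exists_diagSolution_of_le (T : (ι → ℝ) →L[ℝ] E) ht hle
  · push Not at h
    exact exists_diagSolution_of_forall_lt T hσ h

end DiagonalProblem

open scoped ComplexOrder in
theorem Matrix.IsHermitian.exists_add_smul_eq_conjTranspose_mul_diagonal_mul {𝕜 n : Type*}
    [RCLike 𝕜] [Fintype n] [DecidableEq n] {A M : Matrix n n 𝕜} (hA : A.IsHermitian)
    (hM : M.PosDef) :
    ∃ (Q : Matrix n n 𝕜) (d : n → ℝ), IsUnit Q ∧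
      ∀ t : ℝ, A + t • M = Qᴴ * diagonal (fun i => ((d i + t : ℝ) : 𝕜)) * Q := by
  open scoped MatrixOrder in
  obtain ⟨B, hB, rfl⟩ :=
    CStarAlgebra.isStrictlyPositive_iff_eq_star_mul_self.mp hM.isStrictlyPositive
  obtain ⟨C, hCB⟩ := hB.exists_left_inv
  have hA' : (Cᴴ * A * C).IsHermitian := isHermitian_conjTranspose_mul_mul _ hA
  obtain ⟨U, d, hU, hUU, hspec⟩ : ∃ (U : Matrix n n 𝕜) (d : n → ℝ), IsUnit (star U) ∧
      U * star U = 1 ∧ U * diagonal (fun i => (d i : 𝕜)) * star U = Cᴴ * A * C := by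
    refine ⟨hA'.eigenvectorUnitary, hA'.eigenvalues, ?_, Unitary.coe_mul_star_self _, ?_⟩
    · exact Unitary.isUnit_coe (U := star hA'.eigenvectorUnitary)
    · conv_rhs => rw [hA'.spectral_theorem]
      rfl
  refine ⟨star U * B, d, hU.mul hB, fun t => ?_⟩
  have hshift :
      diagonal (fun i => ((d i + t : ℝ) : 𝕜)) = diagonal (fun i => (d i : 𝕜)) + t • 1 := by
    ext i j; by_cases h : i = j <;> simp [h, RCLike.real_smul_eq_coe_mul]
  calc A + t • (star B * B)
      = (C * B)ᴴ * A * (C * B) + t • (Bᴴ * B) := by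
        rw [hCB]; simp [star_eq_conjTranspose]
    _ = Bᴴ * (Cᴴ * A * C + t • (U * star U)) * B := by
        rw [hUU, conjTranspose_mul]; simp [Matrix.mul_add, Matrix.add_mul, Matrix.mul_assoc]
    _ = (star U * B)ᴴ * diagonal (fun i => ((d i + t : ℝ) : 𝕜)) * (star U * B) := by
        rw [hshift, ← hspec]
        simp [Matrix.mul_add, Matrix.add_mul, Matrix.mul_assoc, star_eq_conjTranspose]

theorem regularized_subproblem_well_defined_general {n : ℕ}
    (A M : Matrix (Fin n) (Fin n) ℝ) (hA : A.IsSymm) (hM : M.PosDef)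
    (g : Fin n → ℝ) (σ : ℝ) (hσ : 0 < σ) :
    ∃ (s : Fin n → ℝ) (lam : ℝ),
      (A + lam • M).mulVec s = -(M.mulVec g) ∧
      lam = σ * Real.sqrt (∑ i, s i ^ 2) ∧
      (A + lam • M).PosSemidef := by
  obtain ⟨Q, d, hQ, hAM⟩ :=
    (isHermitian_iff_isSymm.mpr hA).exists_add_smul_eq_conjTranspose_mul_diagonal_mul hM
  simp only [RCLike.ofReal_real_eq_id, id] at hAM
  lift Q to (Matrix (Fin n) (Fin n) ℝ)ˣ using hQ
  set P : Matrix (Fin n) (Fin n) ℝ := ↑Q⁻¹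
  let T : (Fin n → ℝ) ≃L[ℝ] EuclideanSpace ℝ (Fin n) :=
    (toLinearEquiv' P (Units.invertible _)).toContinuousLinearEquiv.trans
      (EuclideanSpace.equiv (Fin n) ℝ).symm
  obtain ⟨y, lam, hy, hlam, hpos⟩ := exists_diagSolution (d := d) (c := Pᴴ *ᵥ M *ᵥ g) T hσ
  refine ⟨P *ᵥ y, lam, ?_, ?_, ?_⟩
  · have hdiag : diagonal (fun i => d i + lam) *ᵥ y = -(Pᴴ *ᵥ M *ᵥ g) := by
      funext i; simpa [mulVec_diagonal] using hy i
    calc (A + lam • M) *ᵥ (P *ᵥ y) = (↑Q)ᴴ *ᵥ (diagonal (fun i => d i + lam) *ᵥ y) := by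
          rw [hAM, ← mulVec_mulVec, ← mulVec_mulVec, mulVec_mulVec y _ P, Q.mul_inv, one_mulVec]
      _ = -(M *ᵥ g) := by
          rw [hdiag, mulVec_neg, mulVec_mulVec, ← conjTranspose_mul, Q.inv_mul,
            conjTranspose_one, one_mulVec]
  · have hnorm : ‖T y‖ = √(∑ i, (P *ᵥ y) i ^ 2) := by
      simp only [T, EuclideanSpace.norm_eq, Real.norm_eq_abs, sq_abs]; rfl
    rw [hlam, hnorm]
  · rw [hAM]; exact (posSemidef_diagonal_iff.mpr hpos).conjTranspose_mul_mul_same _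

/-- Well-definedness of the regularized preconditioned Newton subproblem:
for symmetric `A`, symmetric positive definite `M`, `g ≠ 0` and `σ > 0`, there
exists a pair `(s⋆, λ⋆)` with `(A + λ⋆ M) s⋆ = −M g`, `λ⋆ = σ ‖s⋆‖` (Euclidean
norm), and `A + λ⋆ M` positive semidefinite. -/
theorem regularized_subproblem_well_defined {n : ℕ}
    (A M : Matrix (Fin n) (Fin n) ℝ) (hA : A.IsSymm) (hM : M.PosDef)
    (g : Fin n → ℝ) (hg : g ≠ 0) (σ : ℝ) (hσ : 0 < σ) :
    ∃ (s : Fin n → ℝ) (lam : ℝ),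
      (A + lam • M).mulVec s = -(M.mulVec g) ∧
      lam = σ * Real.sqrt (∑ i, s i ^ 2) ∧
      (A + lam • M).PosSemidef :=
  regularized_subproblem_well_defined_general A M hA hM g σ hσ
end

section
/- Let f : ℝⁿ → ℝ be continuously differentiable and let g : ℝⁿ → ℝⁿ be continuously differentiable with Jacobian H(x) at every x, where H is L_H-Lipschitz continuous with L_H > 0 (‖H(x) − H(y)‖ ≤ L_H ‖x − y‖ in spectral norm). Suppose there is a continuous function ν : ℝⁿ → ℝ with ν(z) ≥ L̃ > 0 for all z and ∇f(z) = ν(z) g(z) for all z ∈ ℝⁿ. Fix x, s ∈ ℝⁿ and σ ≥ L_H such that H(x) s + σ ‖s‖ s = −g(x) and ⟨g(x), s⟩ ≤ 0. Then f(x + s) − f(x) ≤ −(L̃ L_H / 3) ‖s‖³. -/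
/-!
Along the line `t ↦ x + t • s` put `ψ t = ⟪g (x + t • s), s⟫`. The Lipschitz Jacobian gives
`ψ' t ≤ ⟪H x s, s⟫ + L_H t ‖s‖³`, and the step equation together with `⟪g x, s⟫ ≤ 0` and
`σ ≥ L_H` turns this into `ψ t ≤ L_H ‖s‖³ (t² / 2 - t) ≤ 0` on `[0, 1]`. The derivative of
`t ↦ f (x + t • s)` is `ν ψ ≤ L̃ ψ`, so comparing with the cubic `L̃ L_H ‖s‖³ (t³ / 6 - t² / 2)`
bounds the decrease at `t = 1` by `-L̃ L_H ‖s‖³ / 3`.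
-/

open Set
open scoped RealInnerProductSpace

theorem sub_le_sub_of_hasDerivAt_le {φ φ' B B' : ℝ → ℝ} {a b : ℝ} (hab : a ≤ b)
    (hφ : ∀ t, HasDerivAt φ (φ' t) t) (hB : ∀ t, HasDerivAt B (B' t) t)
    (hle : ∀ t ∈ Ico a b, φ' t ≤ B' t) : φ b - φ a ≤ B b - B a := by
  have hB' (t : ℝ) : HasDerivAt (fun u => B u + (φ a - B a)) (B' t) t := (hB t).add_const _
  have := image_le_of_deriv_right_le_deriv_boundary
    (fun t _ => (hφ t).continuousAt.continuousWithinAt) (fun t _ => (hφ t).hasDerivWithinAt)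
    (by simp) (fun t _ => (hB' t).continuousAt.continuousWithinAt)
    (fun t _ => (hB' t).hasDerivWithinAt) hle (right_mem_Icc.2 hab)
  linarith

variable {E : Type*} [NormedAddCommGroup E] [InnerProductSpace ℝ E]

theorem ContinuousLinearMap.inner_apply_le_of_norm_sub_le {A B : E →L[ℝ] E} {K : ℝ}
    (h : ‖A - B‖ ≤ K) (s : E) : ⟪A s, s⟫ ≤ ⟪B s, s⟫ + K * ‖s‖ ^ 2 := by
  have : ⟪(A - B) s, s⟫ ≤ K * ‖s‖ ^ 2 := calc
    ⟪(A - B) s, s⟫ ≤ ‖(A - B) s‖ * ‖s‖ := real_inner_le_norm _ _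
    _ ≤ ‖A - B‖ * ‖s‖ * ‖s‖ := by gcongr; exact (A - B).le_opNorm s
    _ ≤ K * ‖s‖ ^ 2 := by rw [sq, ← mul_assoc]; gcongr
  rw [sub_apply, inner_sub_left] at this
  linarith

theorem hasDerivAt_const_add_smul (x s : E) (t : ℝ) : HasDerivAt (fun t : ℝ => x + t • s) s t := by
  simpa using ((hasDerivAt_id t).smul_const s).const_add x

section Line

variable {g : E → E} {H : E → E →L[ℝ] E}

theorem hasDerivAt_inner_comp_line (hg : ∀ y, HasFDerivAt g (H y) y) (x s : E) (t : ℝ) :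
    HasDerivAt (fun t : ℝ => ⟪g (x + t • s), s⟫) ⟪H (x + t • s) s, s⟫ t := by
  simpa using ((hg _).comp_hasDerivAt t (hasDerivAt_const_add_smul x s t)).inner ℝ
    (hasDerivAt_const t s)

theorem inner_comp_line_le_of_lipschitz (hg : ∀ y, HasFDerivAt g (H y) y) {L : ℝ}
    (hLip : ∀ y z, ‖H y - H z‖ ≤ L * ‖y - z‖) (x s : E) {t : ℝ} (ht : 0 ≤ t) :
    ⟪g (x + t • s), s⟫ ≤ ⟪g x, s⟫ + t * ⟪H x s, s⟫ + L * ‖s‖ ^ 3 * t ^ 2 / 2 := by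
  have hquad (u : ℝ) : HasDerivAt (fun u => u * ⟪H x s, s⟫ + L * ‖s‖ ^ 3 * u ^ 2 / 2)
      (⟪H x s, s⟫ + L * ‖s‖ ^ 3 * u) u := by
    refine (((hasDerivAt_id' u).mul_const _).add
      (((hasDerivAt_pow 2 u).const_mul _).div_const 2)).congr_deriv ?_
    ring
  have hbound (u : ℝ) (hu : u ∈ Ico 0 t) : ⟪H (x + u • s) s, s⟫ ≤ ⟪H x s, s⟫ + L * ‖s‖ ^ 3 * u := by
    have hdist : ‖H (x + u • s) - H x‖ ≤ L * (u * ‖s‖) := by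
      simpa [norm_smul, abs_of_nonneg hu.1] using hLip (x + u • s) x
    calc ⟪H (x + u • s) s, s⟫ ≤ ⟪H x s, s⟫ + L * (u * ‖s‖) * ‖s‖ ^ 2 :=
          (H (x + u • s)).inner_apply_le_of_norm_sub_le hdist s
      _ = ⟪H x s, s⟫ + L * ‖s‖ ^ 3 * u := by ring
  have hcompare := sub_le_sub_of_hasDerivAt_le ht (hasDerivAt_inner_comp_line hg x s) hquad hbound
  simp only [zero_smul, add_zero, zero_mul, ne_eq, OfNat.ofNat_ne_zero, not_false_eq_true,
    zero_pow, mul_zero, zero_div] at hcompare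
  linarith

theorem inner_comp_line_le_of_regularized_step (hg : ∀ y, HasFDerivAt g (H y) y) {L σ : ℝ}
    (hLip : ∀ y z, ‖H y - H z‖ ≤ L * ‖y - z‖) (hσ : L ≤ σ) {x s : E}
    (hstep : H x s + (σ * ‖s‖) • s = -g x) (hdescent : ⟪g x, s⟫ ≤ 0) {t : ℝ} (ht : t ∈ Icc 0 1) :
    ⟪g (x + t • s), s⟫ ≤ L * ‖s‖ ^ 3 * (t ^ 2 / 2 - t) := by
  have hcurv : ⟪H x s, s⟫ = -⟪g x, s⟫ - σ * ‖s‖ ^ 3 := by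
    have := congrArg (⟪·, s⟫) hstep
    simp only [inner_add_left, real_inner_smul_left, inner_neg_left, real_inner_self_eq_norm_sq]
      at this
    linarith
  have htaylor := inner_comp_line_le_of_lipschitz hg hLip x s ht.1
  rw [hcurv] at htaylor
  nlinarith [mul_nonneg (sub_nonneg.2 ht.2) (neg_nonneg.2 hdescent),
    mul_nonneg (mul_nonneg ht.1 (sub_nonneg.2 hσ)) (pow_nonneg (norm_nonneg s) 3)]

end Line

theorem hasDerivAt_comp_line_of_gradient_eq [CompleteSpace E] {f ν : E → ℝ} {g : E → E}
    (hf : Differentiable ℝ f) (hgrad : ∀ z, gradient f z = ν z • g z) (x s : E) (t : ℝ) :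
    HasDerivAt (fun t : ℝ => f (x + t • s)) (ν (x + t • s) * ⟪g (x + t • s), s⟫) t := by
  have hgr : HasGradientAt f (ν (x + t • s) • g (x + t • s)) (x + t • s) :=
    hgrad (x + t • s) ▸ (hf _).hasGradientAt
  have h := hgr.hasFDerivAt.comp_hasDerivAt t (hasDerivAt_const_add_smul x s t)
  rwa [InnerProductSpace.toDual_apply_apply, real_inner_smul_left] at h

theorem regularized_step_sufficient_decrease_general {n : ℕ}
    (f : EuclideanSpace ℝ (Fin n) → ℝ) (hf : ContDiff ℝ 1 f)
    (g : EuclideanSpace ℝ (Fin n) → EuclideanSpace ℝ (Fin n))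
    (H : EuclideanSpace ℝ (Fin n) → EuclideanSpace ℝ (Fin n) →L[ℝ] EuclideanSpace ℝ (Fin n))
    (hgdiff : ∀ x, HasFDerivAt g (H x) x)
    (L_H : ℝ) (hLH : 0 < L_H)
    (hLip : ∀ x y, ‖H x - H y‖ ≤ L_H * ‖x - y‖)
    (ν : EuclideanSpace ℝ (Fin n) → ℝ)
    (Ltil : ℝ) (hLtil : 0 < Ltil) (hνlb : ∀ z, Ltil ≤ ν z)
    (hgrad : ∀ z, gradient f z = ν z • g z)
    (x s : EuclideanSpace ℝ (Fin n)) (σ : ℝ) (hσ : L_H ≤ σ)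
    (hstep : H x s + (σ * ‖s‖) • s = -g x)
    (hdescent : (inner ℝ (g x) s : ℝ) ≤ 0) :
    f (x + s) - f x ≤ -(Ltil * L_H / 3) * ‖s‖ ^ 3 := by
  set K := Ltil * L_H * ‖s‖ ^ 3
  have hcubic (t : ℝ) :
      HasDerivAt (fun t => K * (t ^ 3 / 6 - t ^ 2 / 2)) (K * (t ^ 2 / 2 - t)) t := by
    refine ((((hasDerivAt_pow 3 t).div_const 6).sub
      ((hasDerivAt_pow 2 t).div_const 2)).const_mul K).congr_deriv ?_
    ring
  have hslope (t : ℝ) (ht : t ∈ Ico 0 1) :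
      ν (x + t • s) * ⟪g (x + t • s), s⟫ ≤ K * (t ^ 2 / 2 - t) := by
    have hψ := inner_comp_line_le_of_regularized_step hgdiff hLip hσ hstep hdescent
      (Ico_subset_Icc_self ht)
    have hψ_nonpos : ⟪g (x + t • s), s⟫ ≤ 0 := hψ.trans <|
      mul_nonpos_of_nonneg_of_nonpos (by positivity) (by nlinarith [ht.1, ht.2])
    calc ν (x + t • s) * ⟪g (x + t • s), s⟫ ≤ Ltil * ⟪g (x + t • s), s⟫ :=
          mul_le_mul_of_nonpos_right (hνlb _) hψ_nonpos
      _ ≤ Ltil * (L_H * ‖s‖ ^ 3 * (t ^ 2 / 2 - t)) := by gcongr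
      _ = K * (t ^ 2 / 2 - t) := by ring
  have hdecrease := sub_le_sub_of_hasDerivAt_le zero_le_one
    (hasDerivAt_comp_line_of_gradient_eq (hf.differentiable one_ne_zero) hgrad x s) hcubic hslope
  norm_num at hdecrease
  linarith

/-- Sufficient decrease of the regularized preconditioned Newton step: if `H` is the
`L_H`-Lipschitz Jacobian of `g`, `∇f = ν · g` with `ν ≥ Ltil > 0` continuous, and the
step `s` satisfies `H(x) s + σ‖s‖ s = −g(x)` with `σ ≥ L_H` and `⟨g(x), s⟩ ≤ 0`,
then `f(x+s) − f(x) ≤ −(Ltil L_H / 3) ‖s‖³`. -/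
theorem regularized_step_sufficient_decrease {n : ℕ}
    (f : EuclideanSpace ℝ (Fin n) → ℝ) (hf : ContDiff ℝ 1 f)
    (g : EuclideanSpace ℝ (Fin n) → EuclideanSpace ℝ (Fin n))
    (H : EuclideanSpace ℝ (Fin n) → EuclideanSpace ℝ (Fin n) →L[ℝ] EuclideanSpace ℝ (Fin n))
    (hgdiff : ∀ x, HasFDerivAt g (H x) x) (hHcont : Continuous H)
    (L_H : ℝ) (hLH : 0 < L_H)
    (hLip : ∀ x y, ‖H x - H y‖ ≤ L_H * ‖x - y‖)
    (ν : EuclideanSpace ℝ (Fin n) → ℝ) (hν : Continuous ν)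
    (Ltil : ℝ) (hLtil : 0 < Ltil) (hνlb : ∀ z, Ltil ≤ ν z)
    (hgrad : ∀ z, gradient f z = ν z • g z)
    (x s : EuclideanSpace ℝ (Fin n)) (σ : ℝ) (hσ : L_H ≤ σ)
    (hstep : H x s + (σ * ‖s‖) • s = -g x)
    (hdescent : (inner ℝ (g x) s : ℝ) ≤ 0) :
    f (x + s) - f x ≤ -(Ltil * L_H / 3) * ‖s‖ ^ 3 :=
  regularized_step_sufficient_decrease_general f hf g H hgdiff L_H hLH hLip ν Ltil hLtil hνlb hgrad
    x s σ hσ hstep hdescent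
end

section
/- Let g : ℝⁿ → ℝⁿ be continuously differentiable with Jacobian H(x) at every x, where H is L_H-Lipschitz continuous with L_H ≥ 0 (‖H(x) − H(y)‖ ≤ L_H ‖x − y‖ in spectral norm). Fix x, s ∈ ℝⁿ and σ > 0 such that H(x) s + σ ‖s‖ s = −g(x). Then ‖g(x + s)‖ ≤ ((2σ + L_H)/2) ‖s‖², equivalently ‖s‖² ≥ (2 / (2σ + L_H)) ‖g(x + s)‖. -/
/-!
The step equation says that `g x + H x s = -σ‖s‖ s`, so `g (x + s)` is the first-order Taylor
remainder `g (x + s) - g x - H x s` minus `σ‖s‖ s`. A Lipschitz Jacobian bounds that remainder by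
`L_H/2 ‖s‖²`, and the term `σ‖s‖ s` has norm `σ‖s‖²`.
-/

open Set

theorem norm_sub_sub_fderiv_apply_le_of_lipschitz
    {E F : Type*} [NormedAddCommGroup E] [NormedSpace ℝ E]
    [NormedAddCommGroup F] [NormedSpace ℝ F]
    {f : E → F} {f' : E → E →L[ℝ] F} {L : ℝ} {x : E}
    (hf : ∀ y, HasFDerivAt f (f' y) y) (hL : ∀ y, ‖f' y - f' x‖ ≤ L * ‖y - x‖) (s : E) :
    ‖f (x + s) - f x - f' x s‖ ≤ L / 2 * ‖s‖ ^ 2 := by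
  -- Compare the remainder along `t ↦ x + t • s` with the boundary `t ↦ L/2 ‖s‖² t²`.
  set r : ℝ → F := fun t => f (x + t • s) - f x - t • f' x s
  have hr : ∀ t, HasDerivAt r (f' (x + t • s) s - f' x s) t := fun t => by
    have hline : HasDerivAt (fun t : ℝ => x + t • s) s t := by
      simpa using ((hasDerivAt_id t).smul_const s).const_add x
    exact (((hf _).comp_hasDerivAt t hline).sub_const (f x)).sub
      (by simpa using (hasDerivAt_id t).smul_const (f' x s))
  have hB : ∀ t, HasDerivAt (fun t : ℝ => L / 2 * ‖s‖ ^ 2 * t ^ 2) (L * ‖s‖ ^ 2 * t) t :=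
    fun t => ((hasDerivAt_pow 2 t).const_mul _).congr_deriv (by norm_num; ring)
  have hbound : ∀ t ∈ Ico (0 : ℝ) 1, ‖f' (x + t • s) s - f' x s‖ ≤ L * ‖s‖ ^ 2 * t := by
    rintro t ⟨ht, -⟩
    calc ‖f' (x + t • s) s - f' x s‖ = ‖(f' (x + t • s) - f' x) s‖ := rfl
      _ ≤ ‖f' (x + t • s) - f' x‖ * ‖s‖ := (f' (x + t • s) - f' x).le_opNorm s
      _ ≤ L * ‖x + t • s - x‖ * ‖s‖ := by gcongr; exact hL _
      _ = L * ‖s‖ ^ 2 * t := by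
        rw [add_sub_cancel_left, norm_smul, Real.norm_of_nonneg ht]; ring
  have hend := image_norm_le_of_norm_deriv_right_le_deriv_boundary
    (fun t _ => (hr t).continuousAt.continuousWithinAt) (fun t _ => (hr t).hasDerivWithinAt)
    (by simp [r]) hB hbound (right_mem_Icc.2 zero_le_one)
  simpa [r] using hend

theorem gradient_bound_after_regularized_step_general {n : ℕ}
    (g : EuclideanSpace ℝ (Fin n) → EuclideanSpace ℝ (Fin n))
    (H : EuclideanSpace ℝ (Fin n) → EuclideanSpace ℝ (Fin n) →L[ℝ] EuclideanSpace ℝ (Fin n))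
    (hgdiff : ∀ x, HasFDerivAt g (H x) x)
    (L_H : ℝ)
    (hLip : ∀ x y, ‖H x - H y‖ ≤ L_H * ‖x - y‖)
    (x s : EuclideanSpace ℝ (Fin n)) (σ : ℝ) (hσ : 0 < σ)
    (hstep : H x s + (σ * ‖s‖) • s = -g x) :
    ‖g (x + s)‖ ≤ (2 * σ + L_H) / 2 * ‖s‖ ^ 2 ∧
      2 / (2 * σ + L_H) * ‖g (x + s)‖ ≤ ‖s‖ ^ 2 := by
  have hrem := norm_sub_sub_fderiv_apply_le_of_lipschitz hgdiff (fun y => hLip y x) s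
  have hnext : g (x + s) = (g (x + s) - g x - H x s) - (σ * ‖s‖) • s := by
    rw [sub_sub (g (x + s) - g x), hstep, sub_neg_eq_add, sub_add_cancel]
  have hnorm : ‖g (x + s)‖ ≤ (2 * σ + L_H) / 2 * ‖s‖ ^ 2 :=
    calc ‖g (x + s)‖ = ‖(g (x + s) - g x - H x s) - (σ * ‖s‖) • s‖ := congrArg norm hnext
      _ ≤ ‖g (x + s) - g x - H x s‖ + ‖(σ * ‖s‖) • s‖ := norm_sub_le _ _
      _ ≤ L_H / 2 * ‖s‖ ^ 2 + σ * ‖s‖ ^ 2 := by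
          rw [norm_smul, Real.norm_of_nonneg (by positivity)]; linarith
      _ = (2 * σ + L_H) / 2 * ‖s‖ ^ 2 := by ring
  refine ⟨hnorm, ?_⟩
  rcases le_or_gt (2 * σ + L_H) 0 with hc | hc
  · exact (mul_nonpos_of_nonpos_of_nonneg (div_nonpos_of_nonneg_of_nonpos zero_le_two hc)
      (norm_nonneg _)).trans (by positivity)
  · rw [div_mul_eq_mul_div, div_le_iff₀ hc]
    linarith

/-- Bound on the next (preconditioned) gradient after a regularized Newton step: if
`H` is the `L_H`-Lipschitz Jacobian of `g` and `H(x) s + σ‖s‖ s = −g(x)` with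
`σ > 0`, then `‖g(x+s)‖ ≤ ((2σ + L_H)/2) ‖s‖²`. -/
theorem gradient_bound_after_regularized_step {n : ℕ}
    (g : EuclideanSpace ℝ (Fin n) → EuclideanSpace ℝ (Fin n))
    (H : EuclideanSpace ℝ (Fin n) → EuclideanSpace ℝ (Fin n) →L[ℝ] EuclideanSpace ℝ (Fin n))
    (hgdiff : ∀ x, HasFDerivAt g (H x) x) (hHcont : Continuous H)
    (L_H : ℝ) (hLH : 0 ≤ L_H)
    (hLip : ∀ x y, ‖H x - H y‖ ≤ L_H * ‖x - y‖)
    (x s : EuclideanSpace ℝ (Fin n)) (σ : ℝ) (hσ : 0 < σ)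
    (hstep : H x s + (σ * ‖s‖) • s = -g x) :
    ‖g (x + s)‖ ≤ (2 * σ + L_H) / 2 * ‖s‖ ^ 2 ∧
      2 / (2 * σ + L_H) * ‖g (x + s)‖ ≤ ‖s‖ ^ 2 :=
  gradient_bound_after_regularized_step_general g H hgdiff L_H hLip x s σ hσ hstep
end

section
/- Let f : ℝⁿ → ℝ be continuously differentiable and let g : ℝⁿ → ℝⁿ be continuously differentiable with Jacobian H(x) at every x, where H is L_H-Lipschitz continuous with L_H ≥ 0. Suppose ∇f(z) = ν(z) g(z) for a continuous ν : ℝⁿ → ℝ with ν(z) ≥ L̃ > 0 for all z. Fix x, s, z ∈ ℝⁿ, θ ≥ 0, and σ ≥ L_H + θ such that H(x) s + σ ‖s‖ s = −g(x) + z, ‖z‖ ≤ (θ/2) ‖s‖², and ⟨g(x), s⟩ ≤ 0. Then f(x + s) − f(x) ≤ −(L̃ σ / 4) ‖s‖³. -/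
/-!
Along the segment `t ↦ x + t • s`, the Lipschitz bound on the Jacobian gives the second-order
Taylor estimate `⟪g (x + t • s), s⟫ ≤ ⟪g x, s⟫ + t ⟪H x s, s⟫ + (L_H / 2) t² ‖s‖³`. Eliminating
`⟪H x s, s⟫` with the step equation and using `⟪g x, s⟫ ≤ 0`, `‖z‖ ≤ (θ/2)‖s‖²` and
`σ ≥ L_H + θ` yields `⟪g (x + t • s), s⟫ ≤ -(σ/2) t ‖s‖³` for `t ∈ [0, 1]`. Since
`d/dt f (x + t • s) = ν · ⟪g (x + t • s), s⟫` and `ν ≥ L̃`, comparing derivatives on `[0, 1]`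
with `t ↦ -(L̃ σ / 4) t² ‖s‖³` gives the decrease.
-/

open Set
open scoped InnerProductSpace

theorem sub_le_sub_of_hasDerivAt_le_s16 {F G F' G' : ℝ → ℝ} {a b : ℝ} (hab : a ≤ b)
    (hF : ∀ t, HasDerivAt F (F' t) t) (hG : ∀ t, HasDerivAt G (G' t) t)
    (h : ∀ t ∈ Ioo a b, F' t ≤ G' t) : F b - F a ≤ G b - G a := by
  have hanti : AntitoneOn (F - G) (Icc a b) :=
    antitoneOn_of_hasDerivWithinAt_nonpos (convex_Icc a b)
      (fun t _ => ((hF t).sub (hG t)).continuousAt.continuousWithinAt)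
      (fun t _ => ((hF t).sub (hG t)).hasDerivWithinAt)
      (fun t ht => sub_nonpos.2 (h t (by rwa [interior_Icc] at ht)))
  have := hanti (left_mem_Icc.2 hab) (right_mem_Icc.2 hab) hab
  simp only [Pi.sub_apply] at this
  linarith

theorem hasDerivAt_add_smul {F : Type*} [NormedAddCommGroup F] [NormedSpace ℝ F] (x s : F)
    (t : ℝ) : HasDerivAt (fun u : ℝ => x + u • s) s t := by
  simpa using ((hasDerivAt_id t).smul_const s).const_add x

section

variable {E : Type*} [NormedAddCommGroup E] [InnerProductSpace ℝ E]

theorem hasDerivAt_inner_comp_add_smul {g : E → E} {H : E → E →L[ℝ] E}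
    (hg : ∀ y, HasFDerivAt g (H y) y) (x s : E) (t : ℝ) :
    HasDerivAt (fun u : ℝ => ⟪g (x + u • s), s⟫_ℝ) ⟪H (x + t • s) s, s⟫_ℝ t := by
  simpa using ((hg _).comp_hasDerivAt t (hasDerivAt_add_smul x s t)).inner ℝ
    (hasDerivAt_const t s)

theorem inner_comp_add_smul_le_of_lipschitz_fderiv {g : E → E} {H : E → E →L[ℝ] E} {L : ℝ}
    (hg : ∀ y, HasFDerivAt g (H y) y) (hLip : ∀ y y', ‖H y - H y'‖ ≤ L * ‖y - y'‖)
    (x s : E) {t : ℝ} (ht : 0 ≤ t) :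
    ⟪g (x + t • s), s⟫_ℝ ≤ ⟪g x, s⟫_ℝ + t * ⟪H x s, s⟫_ℝ + L / 2 * t ^ 2 * ‖s‖ ^ 3 := by
  have hquad : ∀ u : ℝ, HasDerivAt (fun u : ℝ => u * ⟪H x s, s⟫_ℝ + L / 2 * u ^ 2 * ‖s‖ ^ 3)
      (⟪H x s, s⟫_ℝ + L * u * ‖s‖ ^ 3) u := fun u => by
    refine ((hasDerivAt_mul_const _).add
      (((hasDerivAt_pow 2 u).const_mul (L / 2)).mul_const (‖s‖ ^ 3))).congr_deriv ?_
    push_cast; ring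
  have hderiv : ∀ u ∈ Ioo 0 t, ⟪H (x + u • s) s, s⟫_ℝ ≤ ⟪H x s, s⟫_ℝ + L * u * ‖s‖ ^ 3 := by
    intro u hu
    have : ⟪(H (x + u • s) - H x) s, s⟫_ℝ ≤ L * u * ‖s‖ ^ 3 :=
      calc ⟪(H (x + u • s) - H x) s, s⟫_ℝ
          ≤ ‖H (x + u • s) - H x‖ * ‖s‖ * ‖s‖ :=
            (real_inner_le_norm _ _).trans (by gcongr; exact ContinuousLinearMap.le_opNorm _ _)
        _ ≤ L * ‖u • s‖ * ‖s‖ * ‖s‖ := by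
            gcongr; simpa using hLip (x + u • s) x
        _ = L * u * ‖s‖ ^ 3 := by rw [norm_smul, Real.norm_of_nonneg hu.1.le]; ring
    rw [sub_apply, inner_sub_left] at this
    linarith
  have := sub_le_sub_of_hasDerivAt_le_s16 ht (hasDerivAt_inner_comp_add_smul hg x s) hquad hderiv
  simp only [zero_smul, add_zero, zero_mul, ne_eq, OfNat.ofNat_ne_zero, not_false_eq_true,
    zero_pow, mul_zero] at this
  linarith

theorem inner_comp_add_smul_le_of_regularized_step {g : E → E} {H : E → E →L[ℝ] E}
    {L θ σ : ℝ} {x s z : E} (hg : ∀ y, HasFDerivAt g (H y) y)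
    (hLip : ∀ y y', ‖H y - H y'‖ ≤ L * ‖y - y'‖) (hL : 0 ≤ L) (hσ : L + θ ≤ σ)
    (hstep : H x s + (σ * ‖s‖) • s = -g x + z) (hz : ‖z‖ ≤ θ / 2 * ‖s‖ ^ 2)
    (hdescent : ⟪g x, s⟫_ℝ ≤ 0) {t : ℝ} (ht : t ∈ Icc 0 1) :
    ⟪g (x + t • s), s⟫_ℝ ≤ -(σ / 2) * t * ‖s‖ ^ 3 := by
  have hHss : ⟪H x s, s⟫_ℝ = -⟪g x, s⟫_ℝ + ⟪z, s⟫_ℝ - σ * ‖s‖ ^ 3 := by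
    have := congrArg (⟪·, s⟫_ℝ) hstep
    simp only [inner_add_left, inner_neg_left, real_inner_smul_left,
      real_inner_self_eq_norm_sq] at this
    linear_combination this
  have hzs : ⟪z, s⟫_ℝ ≤ θ / 2 * ‖s‖ ^ 3 :=
    calc ⟪z, s⟫_ℝ ≤ ‖z‖ * ‖s‖ := real_inner_le_norm _ _
      _ ≤ θ / 2 * ‖s‖ ^ 2 * ‖s‖ := by gcongr
      _ = θ / 2 * ‖s‖ ^ 3 := by ring
  have htaylor := inner_comp_add_smul_le_of_lipschitz_fderiv hg hLip x s ht.1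
  rw [hHss] at htaylor
  have hz_term : t * ⟪z, s⟫_ℝ ≤ t * (θ / 2 * ‖s‖ ^ 3) := mul_le_mul_of_nonneg_left hzs ht.1
  have hL_term : L / 2 * t ^ 2 * ‖s‖ ^ 3 ≤ L / 2 * t * ‖s‖ ^ 3 := by
    gcongr; exact pow_le_of_le_one ht.1 ht.2 two_ne_zero
  have hg_term : (1 - t) * ⟪g x, s⟫_ℝ ≤ 0 :=
    mul_nonpos_of_nonneg_of_nonpos (by linarith [ht.2]) hdescent
  have hσ_term : 0 ≤ t * ‖s‖ ^ 3 * (σ - θ - L) := by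
    exact mul_nonneg (mul_nonneg ht.1 (by positivity)) (by linarith)
  linarith

theorem add_smul_sub_le_of_gradient_eq_smul [CompleteSpace E] {f ν : E → ℝ} {g : E → E}
    {Ltil a : ℝ} {x s : E} (hf : Differentiable ℝ f) (hgrad : ∀ y, gradient f y = ν y • g y)
    (hLtil : 0 ≤ Ltil) (hνlb : ∀ y, Ltil ≤ ν y) (ha : 0 ≤ a)
    (hg : ∀ t ∈ Icc (0 : ℝ) 1, ⟪g (x + t • s), s⟫_ℝ ≤ -a * t) :
    f (x + s) - f x ≤ -(Ltil * a / 2) := by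
  have hF : ∀ t : ℝ, HasDerivAt (fun t : ℝ => f (x + t • s))
      (ν (x + t • s) * ⟪g (x + t • s), s⟫_ℝ) t := fun t => by
    have := (hf _).hasGradientAt.hasFDerivAt.comp_hasDerivAt t (hasDerivAt_add_smul x s t)
    rwa [InnerProductSpace.toDual_apply_apply, hgrad, real_inner_smul_left] at this
  have hG : ∀ t : ℝ, HasDerivAt (fun t : ℝ => -(Ltil * a / 2) * t ^ 2) (Ltil * (-a * t)) t :=
    fun t => ((hasDerivAt_pow 2 t).const_mul _).congr_deriv (by push_cast; ring)
  have hderiv : ∀ t ∈ Ioo (0 : ℝ) 1,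
      ν (x + t • s) * ⟪g (x + t • s), s⟫_ℝ ≤ Ltil * (-a * t) := fun t ht => by
    have hφ := hg t (Ioo_subset_Icc_self ht)
    have hφ_nonpos : ⟪g (x + t • s), s⟫_ℝ ≤ 0 := hφ.trans (by nlinarith [ht.1])
    calc ν (x + t • s) * ⟪g (x + t • s), s⟫_ℝ ≤ Ltil * ⟪g (x + t • s), s⟫_ℝ :=
          mul_le_mul_of_nonpos_right (hνlb _) hφ_nonpos
      _ ≤ Ltil * (-a * t) := mul_le_mul_of_nonneg_left hφ hLtil
  simpa using sub_le_sub_of_hasDerivAt_le_s16 zero_le_one hF hG hderiv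

end

theorem inexact_regularized_step_sufficient_decrease_general {n : ℕ}
    (f : EuclideanSpace ℝ (Fin n) → ℝ) (hf : ContDiff ℝ 1 f)
    (g : EuclideanSpace ℝ (Fin n) → EuclideanSpace ℝ (Fin n))
    (H : EuclideanSpace ℝ (Fin n) → EuclideanSpace ℝ (Fin n) →L[ℝ] EuclideanSpace ℝ (Fin n))
    (hgdiff : ∀ x, HasFDerivAt g (H x) x)
    (L_H : ℝ) (hLH : 0 ≤ L_H)
    (hLip : ∀ x y, ‖H x - H y‖ ≤ L_H * ‖x - y‖)
    (ν : EuclideanSpace ℝ (Fin n) → ℝ)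
    (Ltil : ℝ) (hLtil : 0 < Ltil) (hνlb : ∀ z, Ltil ≤ ν z)
    (hgrad : ∀ z, gradient f z = ν z • g z)
    (x s z : EuclideanSpace ℝ (Fin n)) (θ σ : ℝ) (hθ : 0 ≤ θ)
    (hσ : L_H + θ ≤ σ)
    (hstep : H x s + (σ * ‖s‖) • s = -g x + z)
    (hz : ‖z‖ ≤ θ / 2 * ‖s‖ ^ 2)
    (hdescent : (inner ℝ (g x) s : ℝ) ≤ 0) :
    f (x + s) - f x ≤ -(Ltil * σ / 4) * ‖s‖ ^ 3 := by
  have hσ0 : 0 ≤ σ := by linarith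
  have hdecrease := add_smul_sub_le_of_gradient_eq_smul (x := x) (s := s)
    (a := σ / 2 * ‖s‖ ^ 3)
    (hf.differentiable one_ne_zero) hgrad hLtil.le hνlb (by positivity) fun t ht => by
      have := inner_comp_add_smul_le_of_regularized_step hgdiff hLip hLH hσ hstep hz hdescent ht
      linarith
  linarith

/-- Sufficient decrease of the inexact adaptively regularized preconditioned Newton
step: if `H` is the `L_H`-Lipschitz Jacobian of `g`, `∇f = ν · g` with `ν ≥ L̃ > 0`
continuous, and `s` satisfies `H(x) s + σ‖s‖ s = −g(x) + z` with `σ ≥ L_H + θ`,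
`‖z‖ ≤ (θ/2)‖s‖²`, and `⟨g(x), s⟩ ≤ 0`, then `f(x+s) − f(x) ≤ −(L̃ σ / 4) ‖s‖³`. -/
theorem inexact_regularized_step_sufficient_decrease {n : ℕ}
    (f : EuclideanSpace ℝ (Fin n) → ℝ) (hf : ContDiff ℝ 1 f)
    (g : EuclideanSpace ℝ (Fin n) → EuclideanSpace ℝ (Fin n))
    (H : EuclideanSpace ℝ (Fin n) → EuclideanSpace ℝ (Fin n) →L[ℝ] EuclideanSpace ℝ (Fin n))
    (hgdiff : ∀ x, HasFDerivAt g (H x) x) (hHcont : Continuous H)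
    (L_H : ℝ) (hLH : 0 ≤ L_H)
    (hLip : ∀ x y, ‖H x - H y‖ ≤ L_H * ‖x - y‖)
    (ν : EuclideanSpace ℝ (Fin n) → ℝ) (hν : Continuous ν)
    (Ltil : ℝ) (hLtil : 0 < Ltil) (hνlb : ∀ z, Ltil ≤ ν z)
    (hgrad : ∀ z, gradient f z = ν z • g z)
    (x s z : EuclideanSpace ℝ (Fin n)) (θ σ : ℝ) (hθ : 0 ≤ θ)
    (hσ : L_H + θ ≤ σ)
    (hstep : H x s + (σ * ‖s‖) • s = -g x + z)
    (hz : ‖z‖ ≤ θ / 2 * ‖s‖ ^ 2)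
    (hdescent : (inner ℝ (g x) s : ℝ) ≤ 0) :
    f (x + s) - f x ≤ -(Ltil * σ / 4) * ‖s‖ ^ 3 :=
  inexact_regularized_step_sufficient_decrease_general f hf g H hgdiff L_H hLH hLip ν Ltil hLtil
    hνlb hgrad x s z θ σ hθ hσ hstep hz hdescent
end

section
/- Let g : ℝⁿ → ℝⁿ be continuously differentiable with Jacobian H(x) at every x, where H is L_H-Lipschitz continuous with L_H ≥ 0. Fix x, s, z ∈ ℝⁿ, θ ≥ 0, and 0 < σ ≤ σ_max such that H(x) s + σ ‖s‖ s = −g(x) + z and ‖z‖ ≤ (θ/2) ‖s‖². Then ‖g(x + s)‖ ≤ ((2 σ_max + L_H + θ)/2) ‖s‖², equivalently ‖s‖² ≥ (2 / (2 σ_max + L_H + θ)) ‖g(x + s)‖. -/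
/-!
Along the segment `t ↦ x + t • s`, the first-order Taylor remainder of `g` has derivative
`(H (x + t • s) - H x) s`, of norm at most `L_H t ‖s‖²`; comparing with the boundary function
`L_H t² ‖s‖² / 2` bounds the remainder at `t = 1` by `L_H ‖s‖² / 2`. The step equation writes
`g (x + s)` as this remainder plus `z - σ ‖s‖ s`, and the triangle inequality finishes.
-/

open Set

theorem norm_sub_sub_fderiv_le_of_lipschitzAt_fderiv {E F : Type*}
    [NormedAddCommGroup E] [NormedSpace ℝ E] [NormedAddCommGroup F] [NormedSpace ℝ F]
    {f : E → F} {f' : E → E →L[ℝ] F} {x s : E} {L : ℝ}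
    (hf : ∀ y, HasFDerivAt f (f' y) y) (hLip : ∀ y, ‖f' y - f' x‖ ≤ L * ‖y - x‖) :
    ‖f (x + s) - f x - f' x s‖ ≤ L / 2 * ‖s‖ ^ 2 := by
  let φ : ℝ → F := fun t ↦ f (x + t • s) - f x - t • f' x s
  have hφ (t : ℝ) : HasDerivAt φ (f' (x + t • s) s - f' x s) t := by
    have hline : HasDerivAt (fun t : ℝ ↦ x + t • s) s t := by
      simpa using ((hasDerivAt_id t).smul_const s).const_add x
    exact ((((hf _).comp_hasDerivAt t hline).sub_const (f x)).sub
      ((hasDerivAt_id t).smul_const (f' x s))).congr_deriv (by simp)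
  have hB (t : ℝ) : HasDerivAt (fun t ↦ L / 2 * ‖s‖ ^ 2 * t ^ 2) (L * ‖s‖ ^ 2 * t) t :=
    ((hasDerivAt_pow 2 t).const_mul (L / 2 * ‖s‖ ^ 2)).congr_deriv (by push_cast; ring)
  have bound : ∀ t ∈ Ico (0 : ℝ) 1, ‖f' (x + t • s) s - f' x s‖ ≤ L * ‖s‖ ^ 2 * t := by
    rintro t ⟨ht, -⟩
    calc ‖f' (x + t • s) s - f' x s‖ = ‖(f' (x + t • s) - f' x) s‖ := rfl
      _ ≤ ‖f' (x + t • s) - f' x‖ * ‖s‖ := (f' (x + t • s) - f' x).le_opNorm s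
      _ ≤ L * ‖(x + t • s) - x‖ * ‖s‖ := by gcongr; exact hLip _
      _ = L * ‖s‖ ^ 2 * t := by
        rw [add_sub_cancel_left, norm_smul, Real.norm_of_nonneg ht]; ring
  simpa [φ] using image_norm_le_of_norm_deriv_right_le_deriv_boundary
    (fun t _ ↦ (hφ t).continuousAt.continuousWithinAt) (fun t _ ↦ (hφ t).hasDerivWithinAt)
    (by simp [φ]) hB bound (right_mem_Icc.2 zero_le_one)

theorem norm_apply_add_le_of_regularized_step {E : Type*}
    [NormedAddCommGroup E] [NormedSpace ℝ E]
    {f : E → E} {f' : E → E →L[ℝ] E} {x s z : E} {L σ : ℝ}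
    (hf : ∀ y, HasFDerivAt f (f' y) y) (hLip : ∀ y, ‖f' y - f' x‖ ≤ L * ‖y - x‖)
    (hσ : 0 ≤ σ) (hstep : f' x s + (σ * ‖s‖) • s = -f x + z) :
    ‖f (x + s)‖ ≤ L / 2 * ‖s‖ ^ 2 + ‖z‖ + σ * ‖s‖ ^ 2 := by
  have hsplit : f (x + s) = (f (x + s) - f x - f' x s) + z - (σ * ‖s‖) • s := by
    rw [eq_sub_iff_add_eq.mpr hstep]; abel
  have hreg : ‖(σ * ‖s‖) • s‖ = σ * ‖s‖ ^ 2 := by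
    rw [norm_smul, Real.norm_of_nonneg (by positivity)]; ring
  calc ‖f (x + s)‖ = ‖(f (x + s) - f x - f' x s) + z - (σ * ‖s‖) • s‖ := congrArg norm hsplit
    _ ≤ ‖(f (x + s) - f x - f' x s) + z‖ + ‖(σ * ‖s‖) • s‖ := norm_sub_le _ _
    _ ≤ ‖f (x + s) - f x - f' x s‖ + ‖z‖ + ‖(σ * ‖s‖) • s‖ := by
        gcongr; exact norm_add_le _ _
    _ ≤ L / 2 * ‖s‖ ^ 2 + ‖z‖ + σ * ‖s‖ ^ 2 := by
        rw [hreg]; gcongr; exact norm_sub_sub_fderiv_le_of_lipschitzAt_fderiv hf hLip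

theorem div_mul_le_of_le_half_mul {a b D : ℝ} (ha : 0 ≤ a) (hb : 0 ≤ b)
    (h : a ≤ D / 2 * b) : 2 / D * a ≤ b := by
  rcases le_or_gt D 0 with hD | hD
  · exact (mul_nonpos_of_nonpos_of_nonneg
      (div_nonpos_of_nonneg_of_nonpos zero_le_two hD) ha).trans hb
  · rw [div_mul_eq_mul_div, div_le_iff₀ hD]
    linarith

theorem gradient_bound_after_inexact_regularized_step_general {n : ℕ}
    (g : EuclideanSpace ℝ (Fin n) → EuclideanSpace ℝ (Fin n))
    (H : EuclideanSpace ℝ (Fin n) → EuclideanSpace ℝ (Fin n) →L[ℝ] EuclideanSpace ℝ (Fin n))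
    (hgdiff : ∀ x, HasFDerivAt g (H x) x)
    (L_H : ℝ)
    (hLip : ∀ x y, ‖H x - H y‖ ≤ L_H * ‖x - y‖)
    (x s z : EuclideanSpace ℝ (Fin n)) (θ σ σmax : ℝ)
    (hσ : 0 < σ) (hσmax : σ ≤ σmax)
    (hstep : H x s + (σ * ‖s‖) • s = -g x + z)
    (hz : ‖z‖ ≤ θ / 2 * ‖s‖ ^ 2) :
    ‖g (x + s)‖ ≤ (2 * σmax + L_H + θ) / 2 * ‖s‖ ^ 2 ∧
      2 / (2 * σmax + L_H + θ) * ‖g (x + s)‖ ≤ ‖s‖ ^ 2 := by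
  have hnorm := norm_apply_add_le_of_regularized_step hgdiff (fun y ↦ hLip y x) hσ.le hstep
  have hσs : σ * ‖s‖ ^ 2 ≤ σmax * ‖s‖ ^ 2 := by gcongr
  have hbound : ‖g (x + s)‖ ≤ (2 * σmax + L_H + θ) / 2 * ‖s‖ ^ 2 := by linarith
  exact ⟨hbound, div_mul_le_of_le_half_mul (norm_nonneg _) (by positivity) hbound⟩

/-- Bound on the next (preconditioned) gradient after an inexact regularized Newton
step: if `H` is the `L_H`-Lipschitz Jacobian of `g`, `H(x) s + σ‖s‖ s = −g(x) + z`
with `0 < σ ≤ σ_max` and `‖z‖ ≤ (θ/2)‖s‖²`, then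
`‖g(x+s)‖ ≤ ((2σ_max + L_H + θ)/2) ‖s‖²`. -/
theorem gradient_bound_after_inexact_regularized_step {n : ℕ}
    (g : EuclideanSpace ℝ (Fin n) → EuclideanSpace ℝ (Fin n))
    (H : EuclideanSpace ℝ (Fin n) → EuclideanSpace ℝ (Fin n) →L[ℝ] EuclideanSpace ℝ (Fin n))
    (hgdiff : ∀ x, HasFDerivAt g (H x) x) (hHcont : Continuous H)
    (L_H : ℝ) (hLH : 0 ≤ L_H)
    (hLip : ∀ x y, ‖H x - H y‖ ≤ L_H * ‖x - y‖)
    (x s z : EuclideanSpace ℝ (Fin n)) (θ σ σmax : ℝ) (hθ : 0 ≤ θ)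
    (hσ : 0 < σ) (hσmax : σ ≤ σmax)
    (hstep : H x s + (σ * ‖s‖) • s = -g x + z)
    (hz : ‖z‖ ≤ θ / 2 * ‖s‖ ^ 2) :
    ‖g (x + s)‖ ≤ (2 * σmax + L_H + θ) / 2 * ‖s‖ ^ 2 ∧
      2 / (2 * σmax + L_H + θ) * ‖g (x + s)‖ ≤ ‖s‖ ^ 2 :=
  gradient_bound_after_inexact_regularized_step_general g H hgdiff L_H hLip x s z θ σ σmax hσ hσmax
    hstep hz
end

section
/- Let f : ℝⁿ → ℝ satisfy inf f > −∞, let g : ℝⁿ → ℝⁿ, let ε > 0, η₁ ∈ (0,1), L̃ > 0, and 0 < σ_min ≤ σ_max, L_H ≥ 0, θ ≥ 0. Let {x^k}_{0 ≤ k ≤ K} be a sequence and let S ⊆ {0, …, K−1} (the successful iterations) be such that: (i) x^{k+1} = x^k for k ∉ S; (ii) for each k ∈ S there exist s^k ∈ ℝⁿ and σ_k ∈ [σ_min, σ_max] with x^{k+1} = x^k + s^k, f(x^k) − f(x^{k+1}) ≥ η₁ (L̃/4) σ_k ‖s^k‖³, and ‖s^k‖² ≥ (2 / (2 σ_max + L_H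 + θ)) ‖g(x^{k+1})‖; and (iii) ‖g(x^{k+1})‖ > ε for all 0 ≤ k ≤ K−1. Then the number of successful iterations satisfies |S| ≤ (4 / (η₁ L̃ σ_min)) ((2 σ_max + L_H + θ)/2)^{3/2} (f(x⁰) − inf f) / ε^{3/2} + 1. -/
/-!
Every successful step has `‖s‖² ≥ ‖g‖ / (D/2) > ε / (D/2)` with `D = 2σ_max + L_H + θ`, so by the
sufficient-decrease condition it lowers `f` by at least `c = η₁ (L̃/4) σ_min (ε / (D/2))^{3/2}`,
while unsuccessful steps leave the iterate unchanged. Telescoping, `|S| · c ≤ f(x⁰) − f(x^K) ≤ f(x⁰) − inf f`.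
-/

open Finset

theorem card_mul_le_sub_of_forall_le_sub {u : ℕ → ℝ} {S : Finset ℕ} {K : ℕ} {c : ℝ}
    (hS : S ⊆ range K) (hdrop : ∀ k ∈ S, c ≤ u k - u (k + 1))
    (hnonincr : ∀ k < K, k ∉ S → u (k + 1) ≤ u k) :
    (#S : ℝ) * c ≤ u 0 - u K :=
  calc (#S : ℝ) * c = ∑ _k ∈ S, c := by rw [sum_const, nsmul_eq_mul]
    _ ≤ ∑ k ∈ S, (u k - u (k + 1)) := sum_le_sum hdrop
    _ ≤ ∑ k ∈ range K, (u k - u (k + 1)) :=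
        sum_le_sum_of_subset_of_nonneg hS fun k hk hkS =>
          sub_nonneg.mpr (hnonincr k (mem_range.mp hk) hkS)
    _ = u 0 - u K := sum_range_sub' u K

theorem rpow_three_halves_le_pow_three {t r : ℝ} (ht : 0 ≤ t) (hr : 0 ≤ r) (htr : t ≤ r ^ 2) :
    t ^ ((3 : ℝ) / 2) ≤ r ^ 3 :=
  calc t ^ ((3 : ℝ) / 2) ≤ (r ^ 2) ^ ((3 : ℝ) / 2) := Real.rpow_le_rpow ht htr (by norm_num)
    _ = r ^ 3 := by
        rw [← Real.rpow_natCast r 2, ← Real.rpow_mul hr, ← Real.rpow_natCast r 3]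
        norm_num

theorem mul_rpow_three_halves_le_of_sufficient_decrease {κ σmin σ t r Δ : ℝ} (hκ : 0 ≤ κ)
    (hσmin : 0 ≤ σmin) (hσ : σmin ≤ σ) (ht : 0 ≤ t) (hr : 0 ≤ r) (htr : t ≤ r ^ 2)
    (hdec : κ * σ * r ^ 3 ≤ Δ) :
    κ * σmin * t ^ ((3 : ℝ) / 2) ≤ Δ :=
  calc κ * σmin * t ^ ((3 : ℝ) / 2) ≤ κ * σ * r ^ 3 :=
        mul_le_mul (mul_le_mul_of_nonneg_left hσ hκ) (rpow_three_halves_le_pow_three ht hr htr)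
          (by positivity) (mul_nonneg hκ (hσmin.trans hσ))
    _ ≤ Δ := hdec

theorem le_of_mul_rpow_three_halves_le {N F η L σ ε a : ℝ} (hη : 0 < η) (hL : 0 < L)
    (hσ : 0 < σ) (hε : 0 < ε) (ha : 0 < a)
    (h : N * (η * (L / 4) * σ * (ε / a) ^ ((3 : ℝ) / 2)) ≤ F) :
    N ≤ 4 / (η * L * σ) * a ^ ((3 : ℝ) / 2) * F / ε ^ ((3 : ℝ) / 2) := by
  have hε32 : 0 < ε ^ ((3 : ℝ) / 2) := by positivity
  have ha32 : 0 < a ^ ((3 : ℝ) / 2) := by positivity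
  rw [Real.div_rpow hε.le ha.le] at h
  rw [div_mul_eq_mul_div, div_mul_eq_mul_div, div_div, le_div_iff₀ (by positivity)]
  field_simp at h ⊢
  linarith

theorem adaptive_successful_iterations_bound_general {n : ℕ}
    (f : EuclideanSpace ℝ (Fin n) → ℝ) (hbdd : BddBelow (Set.range f))
    (g : EuclideanSpace ℝ (Fin n) → EuclideanSpace ℝ (Fin n))
    (ε η₁ Ltil σmin σmax L_H θ : ℝ)
    (hε : 0 < ε) (hη₁ : 0 < η₁) (hLtil : 0 < Ltil)
    (hσmin : 0 < σmin) (hσ : σmin ≤ σmax) (hLH : 0 ≤ L_H) (hθ : 0 ≤ θ)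
    (K : ℕ) (x : ℕ → EuclideanSpace ℝ (Fin n))
    (S : Finset ℕ) (hS : S ⊆ Finset.range K)
    (hunsucc : ∀ k < K, k ∉ S → x (k + 1) = x k)
    (hsucc : ∀ k ∈ S, ∃ (s : EuclideanSpace ℝ (Fin n)) (σk : ℝ),
      σmin ≤ σk ∧ σk ≤ σmax ∧ x (k + 1) = x k + s ∧
      η₁ * (Ltil / 4) * σk * ‖s‖ ^ 3 ≤ f (x k) - f (x (k + 1)) ∧
      2 / (2 * σmax + L_H + θ) * ‖g (x (k + 1))‖ ≤ ‖s‖ ^ 2)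
    (hgrad : ∀ k < K, ε < ‖g (x (k + 1))‖) :
    (S.card : ℝ) ≤ 4 / (η₁ * Ltil * σmin) *
      ((2 * σmax + L_H + θ) / 2) ^ ((3 : ℝ) / 2) *
      (f (x 0) - ⨅ y, f y) / ε ^ ((3 : ℝ) / 2) + 1 := by
  set D := 2 * σmax + L_H + θ
  have hD : 0 < D := by linarith
  set c := η₁ * (Ltil / 4) * σmin * (ε / (D / 2)) ^ ((3 : ℝ) / 2)
  have hdrop : ∀ k ∈ S, c ≤ f (x k) - f (x (k + 1)) := by
    intro k hk
    obtain ⟨s, σk, hσk, -, -, hdec, hstep⟩ := hsucc k hk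
    have hεs : ε / (D / 2) ≤ ‖s‖ ^ 2 := by
      have := hgrad k (mem_range.mp (hS hk))
      calc ε / (D / 2) = 2 / D * ε := by field_simp
        _ ≤ 2 / D * ‖g (x (k + 1))‖ := by gcongr
        _ ≤ ‖s‖ ^ 2 := hstep
    exact mul_rpow_three_halves_le_of_sufficient_decrease (by positivity) hσmin.le hσk
      (by positivity) (norm_nonneg s) hεs hdec
  have htotal : (#S : ℝ) * c ≤ f (x 0) - ⨅ y, f y := by
    have := card_mul_le_sub_of_forall_le_sub hS hdrop fun k hk hkS => by
      rw [hunsucc k hk hkS]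
    linarith [ciInf_le hbdd (x K)]
  linarith [le_of_mul_rpow_three_halves_le hη₁ hLtil hσmin hε (by positivity : 0 < D / 2) htotal]

/-- Bound on the number of successful iterations of the adaptive regularized
preconditioned Newton scheme: under the sufficient-decrease and step-length
properties of successful iterations, if all observed (preconditioned) gradients
exceed `ε`, then the number of successful iterations is at most
`(4/(η₁ L̃ σ_min)) ((2σ_max + L_H + θ)/2)^{3/2} (f(x⁰) − inf f)/ε^{3/2} + 1`. -/
theorem adaptive_successful_iterations_bound {n : ℕ}
    (f : EuclideanSpace ℝ (Fin n) → ℝ) (hbdd : BddBelow (Set.range f))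
    (g : EuclideanSpace ℝ (Fin n) → EuclideanSpace ℝ (Fin n))
    (ε η₁ Ltil σmin σmax L_H θ : ℝ)
    (hε : 0 < ε) (hη₁ : 0 < η₁) (hη₁' : η₁ < 1) (hLtil : 0 < Ltil)
    (hσmin : 0 < σmin) (hσ : σmin ≤ σmax) (hLH : 0 ≤ L_H) (hθ : 0 ≤ θ)
    (K : ℕ) (x : ℕ → EuclideanSpace ℝ (Fin n))
    (S : Finset ℕ) (hS : S ⊆ Finset.range K)
    (hunsucc : ∀ k < K, k ∉ S → x (k + 1) = x k)
    (hsucc : ∀ k ∈ S, ∃ (s : EuclideanSpace ℝ (Fin n)) (σk : ℝ),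
      σmin ≤ σk ∧ σk ≤ σmax ∧ x (k + 1) = x k + s ∧
      η₁ * (Ltil / 4) * σk * ‖s‖ ^ 3 ≤ f (x k) - f (x (k + 1)) ∧
      2 / (2 * σmax + L_H + θ) * ‖g (x (k + 1))‖ ≤ ‖s‖ ^ 2)
    (hgrad : ∀ k < K, ε < ‖g (x (k + 1))‖) :
    (S.card : ℝ) ≤ 4 / (η₁ * Ltil * σmin) *
      ((2 * σmax + L_H + θ) / 2) ^ ((3 : ℝ) / 2) *
      (f (x 0) - ⨅ y, f y) / ε ^ ((3 : ℝ) / 2) + 1 :=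
  adaptive_successful_iterations_bound_general f hbdd g ε η₁ Ltil σmin σmax L_H θ hε hη₁ hLtil hσmin
    hσ hLH hθ K x S hS hunsucc hsucc hgrad
end
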